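/- arXiv:2504.20470 — 4 statements merged into one kernel-verified Lean document; each statement's English description precedes it below -/
import Mathlib

section
/- Identifiability of the joint distribution of potential outcomes for a binary outcome (Theorem 1): Suppose two models (Ω, ℱ, μ, G, A, Y⁰, Y¹) and (Ω', ℱ', μ', G', A', Y'⁰, Y'¹) each satisfy Assumption 1, Assumption 2, and Condition 1, and have the same observed data distribution, i.e. μ(G=g, A=a, Y=y) = μ'(G'=g, A'=a, Y'=y) for all g ∈ Fin m and a, y ∈ {0,1}. Then for all a, b ∈ {0,1} and every g ∈ Fin m: P(Y¹=b | Y⁰=a) = P'(Y'¹=b | Y'⁰=a) and P(Y⁰=a, Y¹=b | G=g) = P'(Y'⁰=a, Y'¹=b | G'=g); that is, the conditional distribution P(Y¹ | Y⁰) and the joint distributions P(Y⁰, Y¹ | G=g) are identified from the observed data distribution. -/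
/-!
In every trial the treatment is independent of `(Y⁰, Y¹)`, so the arm `A = 0` reveals the law of
`Y⁰` in that trial and the arm `A = 1` the law of `Y¹`; both are therefore functions of the
observed data. Transportability makes the transition matrix `P(Y¹ | Y⁰)` common to all trials, so
`P(Y¹ = b | G = g) = ∑ₐ P(Y⁰ = a | G = g) P(Y¹ = b | Y⁰ = a)` for every `g`: the observed
column `P(Y¹ = b | G = ·)` is the image of `P(Y¹ = b | Y⁰ = ·)` under the `m × 2` matrix of
Condition 1, which is injective since it has full column rank. The joint laws then follow from
`P(Y⁰ = a, Y¹ = b | G = g) = P(Y⁰ = a | G = g) P(Y¹ = b | Y⁰ = a)`.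
-/

open MeasureTheory ProbabilityTheory

/-- Conditional probability `P(E | F) = μ(E ∩ F) / μ(F)` as a real number. -/
noncomputable def condP {Ω : Type*} [MeasurableSpace Ω] (μ : Measure Ω) (E F : Set Ω) : ℝ :=
  (μ (E ∩ F)).toReal / (μ F).toReal

open Set

theorem Matrix.mulVec_injective_of_rank_eq_card {m n K : Type*} [Fintype m] [Fintype n]
    [Field K] {M : Matrix m n K} (h : M.rank = Fintype.card n) : Function.Injective M.mulVec := by
  have hdim := M.mulVecLin.finrank_range_add_finrank_ker
  rw [← Matrix.rank, h, Module.finrank_fintype_fun_eq_card] at hdim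
  have hker : LinearMap.ker M.mulVecLin = ⊥ := Submodule.finrank_eq_zero.mp (by omega)
  exact LinearMap.ker_eq_bot.mp hker

section CondP

variable {Ω : Type*} [MeasurableSpace Ω] {μ : Measure Ω}

theorem condP_eq_measureReal_div (E F : Set Ω) : condP μ E F = μ.real (E ∩ F) / μ.real F := rfl

theorem measureReal_pos_of_condP_pos {E F : Set Ω} (h : 0 < condP μ E F) :
    0 < μ.real (E ∩ F) ∧ 0 < μ.real F := by
  rcases div_pos_iff.mp h with hpos | ⟨hneg, -⟩
  · exact hpos
  · exact absurd hneg measureReal_nonneg.not_gt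

theorem condP_inter_right_of_indep {T E F : Set Ω}
    (h : condP μ (T ∩ E) F = condP μ T F * condP μ E F) (hT : 0 < condP μ T F) :
    condP μ E (T ∩ F) = condP μ E F := by
  obtain ⟨hTF, hF⟩ := measureReal_pos_of_condP_pos hT
  simp only [condP_eq_measureReal_div] at h ⊢
  rw [← inter_assoc, inter_comm E T, div_eq_div_iff hTF.ne' hF.ne']
  field_simp at h
  linear_combination h

variable [IsFiniteMeasure μ]

theorem measureReal_inter_false_add_inter_true {f : Ω → Bool} (hf : Measurable f) (S : Set Ω) :
    μ.real (S ∩ {ω | f ω = false}) + μ.real (S ∩ {ω | f ω = true}) = μ.real S := by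
  have hcompl : S \ {ω | f ω = true} = S ∩ {ω | f ω = false} := by
    ext ω
    simp
  rw [← hcompl]
  exact measureReal_sdiff_add_inter (hf (measurableSet_singleton true))

theorem condP_inter_false_add_inter_true {f : Ω → Bool} (hf : Measurable f) (E F : Set Ω) :
    condP μ (E ∩ {ω | f ω = false}) F + condP μ (E ∩ {ω | f ω = true}) F = condP μ E F := by
  simp only [condP_eq_measureReal_div, ← add_div, inter_right_comm _ _ F]
  rw [measureReal_inter_false_add_inter_true hf]

theorem condP_false_add_condP_true {f : Ω → Bool} (hf : Measurable f) {F : Set Ω}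
    (hF : μ.real F ≠ 0) : condP μ {ω | f ω = false} F + condP μ {ω | f ω = true} F = 1 := by
  simpa [condP_eq_measureReal_div, hF] using condP_inter_false_add_inter_true (μ := μ) hf univ F

/-- Chain rule; when `μ (E ∩ F) = 0` both sides vanish. -/
theorem condP_inter_eq_mul (H E F : Set Ω) :
    condP μ (H ∩ E) F = condP μ E F * condP μ H (E ∩ F) := by
  simp only [condP_eq_measureReal_div]
  by_cases hEF : μ.real (E ∩ F) = 0
  · have hHEF : μ.real (H ∩ E ∩ F) = 0 :=
      measureReal_mono_null (by rw [inter_assoc]; exact inter_subset_right) hEF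
    simp [hEF, hHEF]
  · rw [inter_assoc]
    field_simp

theorem condP_inter_eq_mul_of_forall_bool {T E F : Set Ω} {f : Ω → Bool} (hf : Measurable f)
    (h : ∀ b, condP μ (T ∩ (E ∩ {ω | f ω = b})) F = condP μ T F * condP μ (E ∩ {ω | f ω = b}) F) :
    condP μ (T ∩ E) F = condP μ T F * condP μ E F := by
  rw [← condP_inter_false_add_inter_true hf (T ∩ E), ← condP_inter_false_add_inter_true hf E,
    inter_assoc, inter_assoc, h, h, mul_add]

end CondP

noncomputable def observedCondP {Ω : Type*} [MeasurableSpace Ω] (μ : Measure Ω) {m : ℕ}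
    (G : Ω → Fin m) (A Y : Ω → Bool) (g : Fin m) (a y : Bool) : ℝ :=
  μ.real {ω | G ω = g ∧ A ω = a ∧ Y ω = y} /
    ∑ y' : Bool, μ.real {ω | G ω = g ∧ A ω = a ∧ Y ω = y'}

theorem observedCondP_congr {Ω Ω' : Type*} [MeasurableSpace Ω] [MeasurableSpace Ω']
    {μ : Measure Ω} {μ' : Measure Ω'} {m : ℕ} {G : Ω → Fin m} {A Y : Ω → Bool}
    {G' : Ω' → Fin m} {A' Y' : Ω' → Bool}
    (h : ∀ g a y, μ {ω | G ω = g ∧ A ω = a ∧ Y ω = y} = μ' {ω | G' ω = g ∧ A' ω = a ∧ Y' ω = y}) :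
    observedCondP μ G A Y = observedCondP μ' G' A' Y' := by
  funext g a y
  simp only [observedCondP, Measure.real, h]

section Model

variable {Ω : Type*} [MeasurableSpace Ω] {μ : Measure Ω} [IsFiniteMeasure μ] {m : ℕ}
  {G : Ω → Fin m} {A Y0 Y1 Y : Ω → Bool} {g : Fin m}

theorem condP_eq_observedCondP {Z : Ω → Bool} (hZ : Measurable Z) {a : Bool}
    (hYZ : ∀ ω, A ω = a → Y ω = Z ω) (y : Bool) :
    condP μ {ω | Z ω = y} ({ω | A ω = a} ∩ {ω | G ω = g}) = observedCondP μ G A Y g a y := by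
  have hcell : ∀ y, {ω | G ω = g ∧ A ω = a ∧ Y ω = y} =
      ({ω | A ω = a} ∩ {ω | G ω = g}) ∩ {ω | Z ω = y} := by
    intro y
    ext ω
    simp only [mem_ofPred_eq, mem_inter_iff]
    constructor
    · rintro ⟨hg, ha, hy⟩
      exact ⟨⟨ha, hg⟩, (hYZ ω ha).symm.trans hy⟩
    · rintro ⟨⟨ha, hg⟩, hy⟩
      exact ⟨hg, ha, (hYZ ω ha).trans hy⟩
  rw [observedCondP, Fintype.sum_bool, hcell, hcell, hcell, add_comm,
    measureReal_inter_false_add_inter_true hZ, condP_eq_measureReal_div,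
    inter_comm {ω | Z ω = y}]

theorem condP_arm_pos (hA : Measurable A)
    (hov : 0 < condP μ {ω | A ω = true} {ω | G ω = g} ∧ condP μ {ω | A ω = true} {ω | G ω = g} < 1)
    (a : Bool) : 0 < condP μ {ω | A ω = a} {ω | G ω = g} := by
  cases a
  · have := condP_false_add_condP_true hA (measureReal_pos_of_condP_pos hov.1).2.ne'
    linarith [hov.2]
  · exact hov.1

theorem condP_Y0_inter_arm (hY1 : Measurable Y1) {a : Bool}
    (hind : ∀ y0 y1, condP μ {ω | A ω = a ∧ Y0 ω = y0 ∧ Y1 ω = y1} {ω | G ω = g} =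
      condP μ {ω | A ω = a} {ω | G ω = g} * condP μ {ω | Y0 ω = y0 ∧ Y1 ω = y1} {ω | G ω = g})
    (ha : 0 < condP μ {ω | A ω = a} {ω | G ω = g}) (y : Bool) :
    condP μ {ω | Y0 ω = y} ({ω | A ω = a} ∩ {ω | G ω = g}) = condP μ {ω | Y0 ω = y} {ω | G ω = g} :=
  condP_inter_right_of_indep
    (condP_inter_eq_mul_of_forall_bool hY1 fun b => by simpa only [ofPred_and] using hind y b) ha

theorem condP_Y1_inter_arm (hY0 : Measurable Y0) {a : Bool}
    (hind : ∀ y0 y1, condP μ {ω | A ω = a ∧ Y0 ω = y0 ∧ Y1 ω = y1} {ω | G ω = g} =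
      condP μ {ω | A ω = a} {ω | G ω = g} * condP μ {ω | Y0 ω = y0 ∧ Y1 ω = y1} {ω | G ω = g})
    (ha : 0 < condP μ {ω | A ω = a} {ω | G ω = g}) (y : Bool) :
    condP μ {ω | Y1 ω = y} ({ω | A ω = a} ∩ {ω | G ω = g}) = condP μ {ω | Y1 ω = y} {ω | G ω = g} :=
  condP_inter_right_of_indep
    (condP_inter_eq_mul_of_forall_bool hY0 fun b => by
      simpa only [ofPred_and, inter_comm {ω | Y1 ω = y}] using hind b y) ha

theorem condP_joint_eq_mul_transition
    (htrans : ∀ a b, 0 < μ {ω | Y0 ω = a ∧ G ω = g} →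
      condP μ {ω | Y1 ω = b} {ω | Y0 ω = a ∧ G ω = g} = condP μ {ω | Y1 ω = b} {ω | Y0 ω = a})
    (a b : Bool) :
    condP μ {ω | Y0 ω = a ∧ Y1 ω = b} {ω | G ω = g} =
      condP μ {ω | Y0 ω = a} {ω | G ω = g} * condP μ {ω | Y1 ω = b} {ω | Y0 ω = a} := by
  rw [ofPred_and, inter_comm, condP_inter_eq_mul, ← ofPred_and]
  rcases eq_zero_or_pos (μ {ω | Y0 ω = a ∧ G ω = g}) with hnull | hpos
  · rw [condP_eq_measureReal_div {ω | Y0 ω = a}, ← ofPred_and, measureReal_def, hnull]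
    simp
  · rw [htrans a b hpos]

theorem mulVec_transition_eq_condP_Y1 (hY0 : Measurable Y0)
    (htrans : ∀ a b g, 0 < μ {ω | Y0 ω = a ∧ G ω = g} →
      condP μ {ω | Y1 ω = b} {ω | Y0 ω = a ∧ G ω = g} = condP μ {ω | Y1 ω = b} {ω | Y0 ω = a})
    (b : Bool) :
    (Matrix.of fun g a => condP μ {ω | Y0 ω = a} {ω | G ω = g}).mulVec
      (fun a => condP μ {ω | Y1 ω = b} {ω | Y0 ω = a}) =
        fun g => condP μ {ω | Y1 ω = b} {ω | G ω = g} := by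
  funext g
  simp only [Matrix.mulVec, dotProduct, Matrix.of_apply, Fintype.sum_bool]
  rw [← condP_joint_eq_mul_transition (htrans · · g),
    ← condP_joint_eq_mul_transition (htrans · · g), ← condP_inter_false_add_inter_true hY0 {ω | Y1 ω = b}, add_comm]
  simp only [ofPred_and, inter_comm {ω | Y1 ω = b}]

theorem condP_Y0_eq_observedCondP (hA : Measurable A) (hY0 : Measurable Y0)
    (hY1 : Measurable Y1) (hY : ∀ ω, Y ω = bif A ω then Y1 ω else Y0 ω)
    (hov : 0 < condP μ {ω | A ω = true} {ω | G ω = g} ∧ condP μ {ω | A ω = true} {ω | G ω = g} < 1)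
    (hind : ∀ y0 y1, condP μ {ω | A ω = false ∧ Y0 ω = y0 ∧ Y1 ω = y1} {ω | G ω = g} =
      condP μ {ω | A ω = false} {ω | G ω = g} * condP μ {ω | Y0 ω = y0 ∧ Y1 ω = y1} {ω | G ω = g})
    (y : Bool) : condP μ {ω | Y0 ω = y} {ω | G ω = g} = observedCondP μ G A Y g false y := by
  rw [← condP_Y0_inter_arm hY1 hind (condP_arm_pos hA hov false) y]
  exact condP_eq_observedCondP hY0 (fun ω ha => by simp [hY, ha]) y

theorem condP_Y1_eq_observedCondP (hY0 : Measurable Y0) (hY1 : Measurable Y1)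
    (hY : ∀ ω, Y ω = bif A ω then Y1 ω else Y0 ω)
    (hov : 0 < condP μ {ω | A ω = true} {ω | G ω = g})
    (hind : ∀ y0 y1, condP μ {ω | A ω = true ∧ Y0 ω = y0 ∧ Y1 ω = y1} {ω | G ω = g} =
      condP μ {ω | A ω = true} {ω | G ω = g} * condP μ {ω | Y0 ω = y0 ∧ Y1 ω = y1} {ω | G ω = g})
    (y : Bool) : condP μ {ω | Y1 ω = y} {ω | G ω = g} = observedCondP μ G A Y g true y := by
  rw [← condP_Y1_inter_arm hY0 hind hov y]
  exact condP_eq_observedCondP hY1 (fun ω ha => by simp [hY, ha]) y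

end Model

theorem stmt0_general
    {Ω Ω' : Type*} [MeasurableSpace Ω] [MeasurableSpace Ω']
    (μ : Measure Ω) (μ' : Measure Ω')
    [IsProbabilityMeasure μ] [IsProbabilityMeasure μ']
    {m : ℕ}
    (G : Ω → Fin m) (A Y0 Y1 Y : Ω → Bool)
    (G' : Ω' → Fin m) (A' Y0' Y1' Y' : Ω' → Bool)
    (hAmeas : Measurable A)
    (hY0meas : Measurable Y0) (hY1meas : Measurable Y1)
    (hA'meas : Measurable A')
    (hY0'meas : Measurable Y0') (hY1'meas : Measurable Y1')
    (hYdef : ∀ ω, Y ω = bif A ω then Y1 ω else Y0 ω)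
    (hY'def : ∀ ω, Y' ω = bif A' ω then Y1' ω else Y0' ω)
    -- Assumption 1 for μ
    (hA1ov : ∀ g : Fin m, 0 < condP μ {ω | A ω = true} {ω | G ω = g} ∧
        condP μ {ω | A ω = true} {ω | G ω = g} < 1)
    (hA1ind : ∀ (g : Fin m) (a y0 y1 : Bool),
      condP μ {ω | A ω = a ∧ Y0 ω = y0 ∧ Y1 ω = y1} {ω | G ω = g} =
        condP μ {ω | A ω = a} {ω | G ω = g} *
          condP μ {ω | Y0 ω = y0 ∧ Y1 ω = y1} {ω | G ω = g})
    -- Assumption 1 for μ'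
    (hA1ov' : ∀ g : Fin m, 0 < condP μ' {ω | A' ω = true} {ω | G' ω = g} ∧
        condP μ' {ω | A' ω = true} {ω | G' ω = g} < 1)
    (hA1ind' : ∀ (g : Fin m) (a y0 y1 : Bool),
      condP μ' {ω | A' ω = a ∧ Y0' ω = y0 ∧ Y1' ω = y1} {ω | G' ω = g} =
        condP μ' {ω | A' ω = a} {ω | G' ω = g} *
          condP μ' {ω | Y0' ω = y0 ∧ Y1' ω = y1} {ω | G' ω = g})
    -- Assumption 2 for μ
    (hA2 : ∀ (a b : Bool) (g : Fin m), 0 < μ {ω | Y0 ω = a ∧ G ω = g} →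
      condP μ {ω | Y1 ω = b} {ω | Y0 ω = a ∧ G ω = g} =
        condP μ {ω | Y1 ω = b} {ω | Y0 ω = a})
    -- Assumption 2 for μ'
    (hA2' : ∀ (a b : Bool) (g : Fin m), 0 < μ' {ω | Y0' ω = a ∧ G' ω = g} →
      condP μ' {ω | Y1' ω = b} {ω | Y0' ω = a ∧ G' ω = g} =
        condP μ' {ω | Y1' ω = b} {ω | Y0' ω = a})
    -- Condition 1 for μ and μ'
    (hC1 : (Matrix.of fun (g : Fin m) (a : Bool) =>
      condP μ {ω | Y0 ω = a} {ω | G ω = g}).rank = 2)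
    -- equal observed data distributions
    (hobs : ∀ (g : Fin m) (a y : Bool),
      μ {ω | G ω = g ∧ A ω = a ∧ Y ω = y} = μ' {ω | G' ω = g ∧ A' ω = a ∧ Y' ω = y}) :
    ∀ (a b : Bool) (g : Fin m),
      condP μ {ω | Y1 ω = b} {ω | Y0 ω = a} =
        condP μ' {ω | Y1' ω = b} {ω | Y0' ω = a} ∧
      condP μ {ω | Y0 ω = a ∧ Y1 ω = b} {ω | G ω = g} =
        condP μ' {ω | Y0' ω = a ∧ Y1' ω = b} {ω | G' ω = g} := by
  have hY0law : ∀ g a, condP μ {ω | Y0 ω = a} {ω | G ω = g} =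
      condP μ' {ω | Y0' ω = a} {ω | G' ω = g} := fun g a => by
    rw [condP_Y0_eq_observedCondP hAmeas hY0meas hY1meas hYdef (hA1ov g) (hA1ind g false),
      condP_Y0_eq_observedCondP hA'meas hY0'meas hY1'meas hY'def (hA1ov' g) (hA1ind' g false),
      observedCondP_congr hobs]
  have hY1law : ∀ g b, condP μ {ω | Y1 ω = b} {ω | G ω = g} =
      condP μ' {ω | Y1' ω = b} {ω | G' ω = g} := fun g b => by
    rw [condP_Y1_eq_observedCondP hY0meas hY1meas hYdef (hA1ov g).1 (hA1ind g true),
      condP_Y1_eq_observedCondP hY0'meas hY1'meas hY'def (hA1ov' g).1 (hA1ind' g true),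
      observedCondP_congr hobs]
  have hM : (Matrix.of fun g a => condP μ {ω | Y0 ω = a} {ω | G ω = g}) =
      Matrix.of fun g a => condP μ' {ω | Y0' ω = a} {ω | G' ω = g} :=
    Matrix.ext hY0law
  have htrans : ∀ b, (fun a => condP μ {ω | Y1 ω = b} {ω | Y0 ω = a}) =
      fun a => condP μ' {ω | Y1' ω = b} {ω | Y0' ω = a} := fun b =>
    Matrix.mulVec_injective_of_rank_eq_card hC1 <| by
      rw [mulVec_transition_eq_condP_Y1 hY0meas hA2, hM,
        mulVec_transition_eq_condP_Y1 hY0'meas hA2']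
      exact funext (hY1law · b)
  intro a b g
  refine ⟨congrFun (htrans b) a, ?_⟩
  rw [condP_joint_eq_mul_transition (hA2 · · g), condP_joint_eq_mul_transition (hA2' · · g),
    hY0law, congrFun (htrans b) a]

/-- **Theorem 1 (binary outcome).** Under trial unconfoundedness (Assumption 1),
transportability of state transition probabilities (Assumption 2), and the full-column
rank condition (Condition 1), the conditional distribution `P(Y¹ | Y⁰)` and the joint
distributions `P(Y⁰, Y¹ | G = g)` are identified from the observed data distribution. -/
theorem stmt0
    {Ω Ω' : Type*} [MeasurableSpace Ω] [MeasurableSpace Ω']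
    (μ : Measure Ω) (μ' : Measure Ω')
    [IsProbabilityMeasure μ] [IsProbabilityMeasure μ']
    {m : ℕ} (hm : 1 ≤ m)
    (G : Ω → Fin m) (A Y0 Y1 Y : Ω → Bool)
    (G' : Ω' → Fin m) (A' Y0' Y1' Y' : Ω' → Bool)
    (hGmeas : Measurable G) (hAmeas : Measurable A)
    (hY0meas : Measurable Y0) (hY1meas : Measurable Y1)
    (hG'meas : Measurable G') (hA'meas : Measurable A')
    (hY0'meas : Measurable Y0') (hY1'meas : Measurable Y1')
    (hYdef : ∀ ω, Y ω = bif A ω then Y1 ω else Y0 ω)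
    (hY'def : ∀ ω, Y' ω = bif A' ω then Y1' ω else Y0' ω)
    -- Assumption 1 for μ
    (hA1pos : ∀ g : Fin m, 0 < μ {ω | G ω = g})
    (hA1ov : ∀ g : Fin m, 0 < condP μ {ω | A ω = true} {ω | G ω = g} ∧
        condP μ {ω | A ω = true} {ω | G ω = g} < 1)
    (hA1ind : ∀ (g : Fin m) (a y0 y1 : Bool),
      condP μ {ω | A ω = a ∧ Y0 ω = y0 ∧ Y1 ω = y1} {ω | G ω = g} =
        condP μ {ω | A ω = a} {ω | G ω = g} *
          condP μ {ω | Y0 ω = y0 ∧ Y1 ω = y1} {ω | G ω = g})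
    -- Assumption 1 for μ'
    (hA1pos' : ∀ g : Fin m, 0 < μ' {ω | G' ω = g})
    (hA1ov' : ∀ g : Fin m, 0 < condP μ' {ω | A' ω = true} {ω | G' ω = g} ∧
        condP μ' {ω | A' ω = true} {ω | G' ω = g} < 1)
    (hA1ind' : ∀ (g : Fin m) (a y0 y1 : Bool),
      condP μ' {ω | A' ω = a ∧ Y0' ω = y0 ∧ Y1' ω = y1} {ω | G' ω = g} =
        condP μ' {ω | A' ω = a} {ω | G' ω = g} *
          condP μ' {ω | Y0' ω = y0 ∧ Y1' ω = y1} {ω | G' ω = g})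
    -- Assumption 2 for μ
    (hA2pos : ∀ a : Bool, 0 < μ {ω | Y0 ω = a})
    (hA2 : ∀ (a b : Bool) (g : Fin m), 0 < μ {ω | Y0 ω = a ∧ G ω = g} →
      condP μ {ω | Y1 ω = b} {ω | Y0 ω = a ∧ G ω = g} =
        condP μ {ω | Y1 ω = b} {ω | Y0 ω = a})
    -- Assumption 2 for μ'
    (hA2pos' : ∀ a : Bool, 0 < μ' {ω | Y0' ω = a})
    (hA2' : ∀ (a b : Bool) (g : Fin m), 0 < μ' {ω | Y0' ω = a ∧ G' ω = g} →
      condP μ' {ω | Y1' ω = b} {ω | Y0' ω = a ∧ G' ω = g} =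
        condP μ' {ω | Y1' ω = b} {ω | Y0' ω = a})
    -- Condition 1 for μ and μ'
    (hC1 : (Matrix.of fun (g : Fin m) (a : Bool) =>
      condP μ {ω | Y0 ω = a} {ω | G ω = g}).rank = 2)
    (hC1' : (Matrix.of fun (g : Fin m) (a : Bool) =>
      condP μ' {ω | Y0' ω = a} {ω | G' ω = g}).rank = 2)
    -- equal observed data distributions
    (hobs : ∀ (g : Fin m) (a y : Bool),
      μ {ω | G ω = g ∧ A ω = a ∧ Y ω = y} = μ' {ω | G' ω = g ∧ A' ω = a ∧ Y' ω = y}) :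
    ∀ (a b : Bool) (g : Fin m),
      condP μ {ω | Y1 ω = b} {ω | Y0 ω = a} =
        condP μ' {ω | Y1' ω = b} {ω | Y0' ω = a} ∧
      condP μ {ω | Y0 ω = a ∧ Y1 ω = b} {ω | G ω = g} =
        condP μ' {ω | Y0' ω = a ∧ Y1' ω = b} {ω | G' ω = g} :=
  stmt0_general μ μ' G A Y0 Y1 Y G' A' Y0' Y1' Y' hAmeas hY0meas hY1meas hA'meas hY0'meas hY1'meas
    hYdef hY'def hA1ov hA1ind hA1ov' hA1ind' hA2 hA2' hC1 hobs
end

section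
/- Identifiability on a control-only target population (Corollary 1): Suppose two models (Ω, ℱ, μ, G, A, Y⁰, Y¹) and (Ω', ℱ', μ', G', A', Y'⁰, Y'¹), with trial indicator taking values in {0, 1, ..., m} where g = 0 indexes the target population, each satisfy: Assumption 1 for every g ∈ {1, ..., m}; Assumption 2 for every g ∈ {0, 1, ..., m}; Assumption 3 (control-only target: μ(G=0) > 0 and P(A=0 | G=0) = 1, so Y = Y⁰ on {G=0}); and Condition 1 restricted to the trials g ∈ {1, ..., m}. If the two models have the same observed data distribution, i.e. μ(G=g, A=a, Y=y) = μ'(G'=g, A'=a, Y'=y) for all g ∈ {0,...,m} and a, y ∈ {0,1}, then P(Y⁰=a, Y¹=b | G=0) = P'(Y'⁰=a, Y'¹=b | G'=0) for all a, b ∈ {0,1}; that is, the joint distribution of (Y⁰, Y¹) on the control-only target population is identified. -/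
open MeasureTheory ProbabilityTheory

section Aux

variable {Ω : Type*} [MeasurableSpace Ω]

lemma toReal_split (μ : Measure Ω) [IsProbabilityMeasure μ] {T : Ω → Bool} (hT : Measurable T)
    {S : Set Ω} (hS : MeasurableSet S) :
    (μ S).toReal = (μ ({ω | T ω = false} ∩ S)).toReal + (μ ({ω | T ω = true} ∩ S)).toReal := by
  have hd : Disjoint ({ω | T ω = false} ∩ S) ({ω | T ω = true} ∩ S) := by
    rw [Set.disjoint_left]
    rintro ω ⟨h1, -⟩ ⟨h2, -⟩
    simp only [Set.mem_setOf_eq] at h1 h2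
    rw [h1] at h2; exact absurd h2 (by simp)
  have hm := measure_union (μ := μ) hd ((hT (measurableSet_singleton true)).inter hS)
  have hU : ({ω | T ω = false} ∩ S) ∪ ({ω | T ω = true} ∩ S) = S := by
    ext ω; cases h : T ω <;> simp [h]
  rw [hU] at hm
  rw [hm, ENNReal.toReal_add (measure_ne_top μ _) (measure_ne_top μ _)]

lemma condP_split (μ : Measure Ω) [IsProbabilityMeasure μ] {T : Ω → Bool} (hT : Measurable T)
    {E F : Set Ω} (hE : MeasurableSet E) (hF : MeasurableSet F) :
    condP μ E F = condP μ ({ω | T ω = false} ∩ E) F + condP μ ({ω | T ω = true} ∩ E) F := by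
  unfold condP
  rw [← add_div]
  congr 1
  rw [toReal_split μ hT (hE.inter hF), Set.inter_assoc, Set.inter_assoc]

lemma condP_total (μ : Measure Ω) [IsProbabilityMeasure μ] {T : Ω → Bool} (hT : Measurable T)
    {F : Set Ω} (hF : MeasurableSet F) (hpos : (μ F).toReal ≠ 0) :
    condP μ {ω | T ω = false} F + condP μ {ω | T ω = true} F = 1 := by
  have h := condP_split μ hT (E := Set.univ) MeasurableSet.univ hF
  simp only [Set.inter_univ] at h
  rw [← h]
  unfold condP; rw [Set.univ_inter]; exact div_self hpos

lemma condP_chain (μ : Measure Ω) (E F S : Set Ω) (h : (μ (F ∩ S)).toReal ≠ 0) :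
    condP μ (F ∩ E) S = condP μ E (F ∩ S) * condP μ F S := by
  unfold condP
  rw [show (F ∩ E) ∩ S = E ∩ (F ∩ S) by ext ω; simp only [Set.mem_inter_iff]; tauto]
  rw [div_mul_div_comm, mul_comm ((μ (E ∩ (F ∩ S))).toReal) _, mul_div_mul_left _ _ h]

lemma rank2_inj {m : ℕ} (M : Matrix (Fin m) Bool ℝ) (h : M.rank = 2) :
    Function.Injective M.mulVec := by
  have hcard : Module.finrank ℝ (Bool → ℝ) = 2 := by
    simp [Module.finrank_pi]
  have hker : LinearMap.ker M.mulVecLin = ⊥ := by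
    have h1 := LinearMap.finrank_range_add_finrank_ker M.mulVecLin
    rw [hcard] at h1
    have h2 : Module.finrank ℝ (LinearMap.range M.mulVecLin) = 2 := h
    rw [h2] at h1
    have h3 : Module.finrank ℝ (LinearMap.ker M.mulVecLin) = 0 := by omega
    exact Submodule.finrank_eq_zero.mp h3
  intro x y hxy
  exact (LinearMap.ker_eq_bot.mp hker) (by simpa [Matrix.mulVecLin_apply] using hxy)

end Aux

lemma identify
    {Ω : Type*} [MeasurableSpace Ω] (μ : Measure Ω) [IsProbabilityMeasure μ]
    {m : ℕ}
    (G : Ω → Fin (m + 1)) (A Y0 Y1 Y : Ω → Bool)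
    (hGmeas : Measurable G) (hAmeas : Measurable A)
    (hY0meas : Measurable Y0) (hY1meas : Measurable Y1)
    (hYdef : ∀ ω, Y ω = bif A ω then Y1 ω else Y0 ω)
    (hA1pos : ∀ g : Fin (m + 1), g ≠ 0 → 0 < μ {ω | G ω = g})
    (hA1ov : ∀ g : Fin (m + 1), g ≠ 0 → 0 < condP μ {ω | A ω = true} {ω | G ω = g} ∧
        condP μ {ω | A ω = true} {ω | G ω = g} < 1)
    (hA1ind : ∀ g : Fin (m + 1), g ≠ 0 → ∀ (a y0 y1 : Bool),
      condP μ {ω | A ω = a ∧ Y0 ω = y0 ∧ Y1 ω = y1} {ω | G ω = g} =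
        condP μ {ω | A ω = a} {ω | G ω = g} *
          condP μ {ω | Y0 ω = y0 ∧ Y1 ω = y1} {ω | G ω = g})
    (hA2 : ∀ (a b : Bool) (g : Fin (m + 1)), 0 < μ {ω | Y0 ω = a ∧ G ω = g} →
      condP μ {ω | Y1 ω = b} {ω | Y0 ω = a ∧ G ω = g} =
        condP μ {ω | Y1 ω = b} {ω | Y0 ω = a})
    (hA3pos : 0 < μ {ω | G ω = 0}) (hA3 : condP μ {ω | A ω = false} {ω | G ω = 0} = 1) :
    (∀ g : Fin (m + 1), g ≠ 0 → ∀ a : Bool,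
      condP μ {ω | Y0 ω = a} {ω | G ω = g} =
        (μ {ω | G ω = g ∧ A ω = false ∧ Y ω = a}).toReal /
          ((μ {ω | G ω = g ∧ A ω = false ∧ Y ω = false}).toReal +
            (μ {ω | G ω = g ∧ A ω = false ∧ Y ω = true}).toReal)) ∧
    (∀ g : Fin (m + 1), g ≠ 0 → ∀ b : Bool,
      condP μ {ω | Y1 ω = b} {ω | Y0 ω = false} * condP μ {ω | Y0 ω = false} {ω | G ω = g} +
        condP μ {ω | Y1 ω = b} {ω | Y0 ω = true} * condP μ {ω | Y0 ω = true} {ω | G ω = g} =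
        (μ {ω | G ω = g ∧ A ω = true ∧ Y ω = b}).toReal /
          ((μ {ω | G ω = g ∧ A ω = true ∧ Y ω = false}).toReal +
            (μ {ω | G ω = g ∧ A ω = true ∧ Y ω = true}).toReal)) ∧
    (∀ a b : Bool,
      condP μ {ω | Y0 ω = a ∧ Y1 ω = b} {ω | G ω = 0} =
        condP μ {ω | Y1 ω = b} {ω | Y0 ω = a} *
          ((μ {ω | G ω = 0 ∧ A ω = false ∧ Y ω = a}).toReal /
            ((μ {ω | G ω = 0 ∧ A ω = false ∧ Y ω = false}).toReal +
              (μ {ω | G ω = 0 ∧ A ω = false ∧ Y ω = true}).toReal))) := by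
  -- measurability
  have mG : ∀ g : Fin (m+1), MeasurableSet {ω | G ω = g} := fun g => hGmeas (measurableSet_singleton g)
  have mA : ∀ a : Bool, MeasurableSet {ω | A ω = a} := fun a => hAmeas (measurableSet_singleton a)
  have mY0 : ∀ a : Bool, MeasurableSet {ω | Y0 ω = a} := fun a => hY0meas (measurableSet_singleton a)
  have mY1 : ∀ a : Bool, MeasurableSet {ω | Y1 ω = a} := fun a => hY1meas (measurableSet_singleton a)
  have mAY0 : ∀ a y : Bool, MeasurableSet {ω | A ω = a ∧ Y0 ω = y} :=
    fun a y => (mA a).inter (mY0 y)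
  have mAY1 : ∀ a y : Bool, MeasurableSet {ω | A ω = a ∧ Y1 ω = y} :=
    fun a y => (mA a).inter (mY1 y)
  -- observed-set identities
  have hsetF : ∀ (g : Fin (m+1)) (y : Bool),
      {ω | A ω = false ∧ Y0 ω = y} ∩ {ω | G ω = g} = {ω | G ω = g ∧ A ω = false ∧ Y ω = y} := by
    intro g y; ext ω
    cases hA : A ω <;> simp [Set.mem_inter_iff, Set.mem_setOf_eq, hYdef ω, hA] <;> tauto
  have hsetT : ∀ (g : Fin (m+1)) (y : Bool),
      {ω | A ω = true ∧ Y1 ω = y} ∩ {ω | G ω = g} = {ω | G ω = g ∧ A ω = true ∧ Y ω = y} := by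
    intro g y; ext ω
    cases hA : A ω <;> simp [Set.mem_inter_iff, Set.mem_setOf_eq, hYdef ω, hA] <;> tauto
  -- denominators
  have dgpos : ∀ g : Fin (m+1), g ≠ 0 → 0 < (μ {ω | G ω = g}).toReal := fun g hg =>
    ENNReal.toReal_pos (hA1pos g hg).ne' (measure_ne_top μ _)
  have d0pos : 0 < (μ {ω | G ω = (0 : Fin (m+1))}).toReal :=
    ENNReal.toReal_pos hA3pos.ne' (measure_ne_top μ _)
  -- mixture identity (all g)
  have hmix : ∀ (g : Fin (m+1)) (a b : Bool),
      condP μ {ω | Y0 ω = a ∧ Y1 ω = b} {ω | G ω = g} =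
        condP μ {ω | Y1 ω = b} {ω | Y0 ω = a} * condP μ {ω | Y0 ω = a} {ω | G ω = g} := by
    intro g a b
    by_cases h0 : μ {ω | Y0 ω = a ∧ G ω = g} = 0
    · have hsub1 : μ ({ω | Y0 ω = a ∧ Y1 ω = b} ∩ {ω | G ω = g}) = 0 := by
        refine measure_mono_null ?_ h0
        intro ω hω; exact ⟨hω.1.1, hω.2⟩
      have hsub2 : μ ({ω | Y0 ω = a} ∩ {ω | G ω = g}) = 0 := by
        refine measure_mono_null ?_ h0
        intro ω hω; exact ⟨hω.1, hω.2⟩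
      unfold condP; rw [hsub1, hsub2]; simp
    · have hpos : 0 < μ {ω | Y0 ω = a ∧ G ω = g} := pos_iff_ne_zero.mpr h0
      have hne : (μ ({ω | Y0 ω = a} ∩ {ω | G ω = g})).toReal ≠ 0 := by
        have he : ({ω | Y0 ω = a} ∩ {ω | G ω = g}) = {ω | Y0 ω = a ∧ G ω = g} := rfl
        rw [he]; exact (ENNReal.toReal_pos h0 (measure_ne_top μ _)).ne'
      have hchain := condP_chain μ {ω | Y1 ω = b} {ω | Y0 ω = a} {ω | G ω = g} hne
      have he1 : {ω | Y0 ω = a} ∩ {ω | Y1 ω = b} = {ω | Y0 ω = a ∧ Y1 ω = b} := rfl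
      have he2 : {ω | Y0 ω = a} ∩ {ω | G ω = g} = {ω | Y0 ω = a ∧ G ω = g} := rfl
      rw [he1, he2] at hchain
      rw [hchain, hA2 a b g hpos]
  -- independence summed over y1
  have hind2 : ∀ g : Fin (m+1), g ≠ 0 → ∀ (a y0 : Bool),
      condP μ {ω | A ω = a ∧ Y0 ω = y0} {ω | G ω = g} =
        condP μ {ω | A ω = a} {ω | G ω = g} * condP μ {ω | Y0 ω = y0} {ω | G ω = g} := by
    intro g hg a y0
    have e1 : ∀ c : Bool, {ω | Y1 ω = c} ∩ {ω | A ω = a ∧ Y0 ω = y0} =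
        {ω | A ω = a ∧ Y0 ω = y0 ∧ Y1 ω = c} := by
      intro c; ext ω; simp only [Set.mem_inter_iff, Set.mem_setOf_eq] <;> tauto
    have e2 : ∀ c : Bool, {ω | Y1 ω = c} ∩ {ω | Y0 ω = y0} = {ω | Y0 ω = y0 ∧ Y1 ω = c} := by
      intro c; ext ω; simp only [Set.mem_inter_iff, Set.mem_setOf_eq] <;> tauto
    rw [condP_split μ hY1meas (mAY0 a y0) (mG g), e1 false, e1 true,
      hA1ind g hg a y0 false, hA1ind g hg a y0 true,
      condP_split μ hY1meas (mY0 y0) (mG g), e2 false, e2 true, mul_add]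
  -- independence summed over y0
  have hind1 : ∀ g : Fin (m+1), g ≠ 0 → ∀ (a y1 : Bool),
      condP μ {ω | A ω = a ∧ Y1 ω = y1} {ω | G ω = g} =
        condP μ {ω | A ω = a} {ω | G ω = g} * condP μ {ω | Y1 ω = y1} {ω | G ω = g} := by
    intro g hg a y1
    have e1 : ∀ c : Bool, {ω | Y0 ω = c} ∩ {ω | A ω = a ∧ Y1 ω = y1} =
        {ω | A ω = a ∧ Y0 ω = c ∧ Y1 ω = y1} := by
      intro c; ext ω; simp only [Set.mem_inter_iff, Set.mem_setOf_eq] <;> tauto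
    have e2 : ∀ c : Bool, {ω | Y0 ω = c} ∩ {ω | Y1 ω = y1} = {ω | Y0 ω = c ∧ Y1 ω = y1} := by
      intro c; ext ω; simp only [Set.mem_inter_iff, Set.mem_setOf_eq] <;> tauto
    rw [condP_split μ hY0meas (mAY1 a y1) (mG g), e1 false, e1 true,
      hA1ind g hg a false y1, hA1ind g hg a true y1,
      condP_split μ hY0meas (mY1 y1) (mG g), e2 false, e2 true, mul_add]
  -- control-arm probability positive, for trials
  have hAF : ∀ g : Fin (m+1), g ≠ 0 → 0 < condP μ {ω | A ω = false} {ω | G ω = g} := by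
    intro g hg
    have h := condP_total μ hAmeas (mG g) (dgpos g hg).ne'
    have := (hA1ov g hg).2
    linarith
  -- numerator-set sizes in observed terms, control arm
  have hnumF : ∀ (g : Fin (m+1)) (a : Bool),
      condP μ {ω | A ω = false ∧ Y0 ω = a} {ω | G ω = g} =
        (μ {ω | G ω = g ∧ A ω = false ∧ Y ω = a}).toReal / (μ {ω | G ω = g}).toReal := by
    intro g a; unfold condP; rw [hsetF g a]
  have hnumT : ∀ (g : Fin (m+1)) (b : Bool),
      condP μ {ω | A ω = true ∧ Y1 ω = b} {ω | G ω = g} =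
        (μ {ω | G ω = g ∧ A ω = true ∧ Y ω = b}).toReal / (μ {ω | G ω = g}).toReal := by
    intro g b; unfold condP; rw [hsetT g b]
  -- denominator in observed terms, control arm
  have hdenF : ∀ (g : Fin (m+1)),
      condP μ {ω | A ω = false} {ω | G ω = g} =
        ((μ {ω | G ω = g ∧ A ω = false ∧ Y ω = false}).toReal +
          (μ {ω | G ω = g ∧ A ω = false ∧ Y ω = true}).toReal) / (μ {ω | G ω = g}).toReal := by
    intro g
    have e : ∀ c : Bool, {ω | Y0 ω = c} ∩ ({ω | A ω = false} ∩ {ω | G ω = g}) =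
        {ω | G ω = g ∧ A ω = false ∧ Y ω = c} := by
      intro c
      rw [← hsetF g c]; ext ω; simp only [Set.mem_inter_iff, Set.mem_setOf_eq] <;> tauto
    unfold condP
    rw [toReal_split μ hY0meas ((mA false).inter (mG g)), e false, e true]
  have hdenT : ∀ (g : Fin (m+1)),
      condP μ {ω | A ω = true} {ω | G ω = g} =
        ((μ {ω | G ω = g ∧ A ω = true ∧ Y ω = false}).toReal +
          (μ {ω | G ω = g ∧ A ω = true ∧ Y ω = true}).toReal) / (μ {ω | G ω = g}).toReal := by
    intro g
    have e : ∀ c : Bool, {ω | Y1 ω = c} ∩ ({ω | A ω = true} ∩ {ω | G ω = g}) =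
        {ω | G ω = g ∧ A ω = true ∧ Y ω = c} := by
      intro c
      rw [← hsetT g c]; ext ω; simp only [Set.mem_inter_iff, Set.mem_setOf_eq] <;> tauto
    unfold condP
    rw [toReal_split μ hY1meas ((mA true).inter (mG g)), e false, e true]
  -- part (i)
  have part1 : ∀ g : Fin (m + 1), g ≠ 0 → ∀ a : Bool,
      condP μ {ω | Y0 ω = a} {ω | G ω = g} =
        (μ {ω | G ω = g ∧ A ω = false ∧ Y ω = a}).toReal /
          ((μ {ω | G ω = g ∧ A ω = false ∧ Y ω = false}).toReal +
            (μ {ω | G ω = g ∧ A ω = false ∧ Y ω = true}).toReal) := by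
    intro g hg a
    have heq := hind2 g hg false a
    rw [hnumF g a, hdenF g] at heq
    set N := (μ {ω | G ω = g ∧ A ω = false ∧ Y ω = a}).toReal with hN
    set DF := (μ {ω | G ω = g ∧ A ω = false ∧ Y ω = false}).toReal with hDF
    set DT := (μ {ω | G ω = g ∧ A ω = false ∧ Y ω = true}).toReal with hDT
    set D := (μ {ω | G ω = g}).toReal with hD
    have hDpos : 0 < D := dgpos g hg
    have hdenpos : 0 < DF + DT := by
      have := hAF g hg
      rw [hdenF g, ← hDF, ← hDT, ← hD] at this
      exact (div_pos_iff.mp this).resolve_right (by rintro ⟨-, h⟩; linarith) |>.1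
    rw [eq_div_iff hdenpos.ne']
    have heq' : N = (DF + DT) * condP μ {ω | Y0 ω = a} {ω | G ω = g} := by
      field_simp at heq
      linarith
    linarith [heq']
  -- part (ii)
  have part2 : ∀ g : Fin (m + 1), g ≠ 0 → ∀ b : Bool,
      condP μ {ω | Y1 ω = b} {ω | Y0 ω = false} * condP μ {ω | Y0 ω = false} {ω | G ω = g} +
        condP μ {ω | Y1 ω = b} {ω | Y0 ω = true} * condP μ {ω | Y0 ω = true} {ω | G ω = g} =
        (μ {ω | G ω = g ∧ A ω = true ∧ Y ω = b}).toReal /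
          ((μ {ω | G ω = g ∧ A ω = true ∧ Y ω = false}).toReal +
            (μ {ω | G ω = g ∧ A ω = true ∧ Y ω = true}).toReal) := by
    intro g hg b
    -- condP {Y1=b} Sg equals the q·p mixture
    have hsplitY : condP μ {ω | Y1 ω = b} {ω | G ω = g} =
        condP μ {ω | Y1 ω = b} {ω | Y0 ω = false} * condP μ {ω | Y0 ω = false} {ω | G ω = g} +
        condP μ {ω | Y1 ω = b} {ω | Y0 ω = true} * condP μ {ω | Y0 ω = true} {ω | G ω = g} := by
      have e2 : ∀ c : Bool, {ω | Y0 ω = c} ∩ {ω | Y1 ω = b} = {ω | Y0 ω = c ∧ Y1 ω = b} := by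
        intro c; ext ω; simp only [Set.mem_inter_iff, Set.mem_setOf_eq] <;> tauto
      rw [condP_split μ hY0meas (mY1 b) (mG g), e2 false, e2 true, hmix g false b, hmix g true b]
    have heq := hind1 g hg true b
    rw [hnumT g b, hdenT g, hsplitY] at heq
    set N := (μ {ω | G ω = g ∧ A ω = true ∧ Y ω = b}).toReal with hN
    set DF := (μ {ω | G ω = g ∧ A ω = true ∧ Y ω = false}).toReal with hDF
    set DT := (μ {ω | G ω = g ∧ A ω = true ∧ Y ω = true}).toReal with hDT
    set D := (μ {ω | G ω = g}).toReal with hD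
    set S := condP μ {ω | Y1 ω = b} {ω | Y0 ω = false} * condP μ {ω | Y0 ω = false} {ω | G ω = g} +
        condP μ {ω | Y1 ω = b} {ω | Y0 ω = true} * condP μ {ω | Y0 ω = true} {ω | G ω = g} with hS
    have hDpos : 0 < D := dgpos g hg
    have hdenpos : 0 < DF + DT := by
      have := (hA1ov g hg).1
      rw [hdenT g, ← hDF, ← hDT, ← hD] at this
      exact (div_pos_iff.mp this).resolve_right (by rintro ⟨-, h⟩; linarith) |>.1
    rw [eq_div_iff hdenpos.ne']
    have heq' : N = (DF + DT) * S := by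
      field_simp at heq
      linarith
    linarith [heq']
  -- part (iii)
  refine ⟨part1, part2, ?_⟩
  have htot0 := condP_total μ hAmeas (mG 0) d0pos.ne'
  have hAT0 : (μ ({ω | A ω = true} ∩ {ω | G ω = (0 : Fin (m+1))})).toReal = 0 := by
    have h1 : condP μ {ω | A ω = true} {ω | G ω = (0 : Fin (m+1))} = 0 := by
      rw [hA3] at htot0; linarith
    unfold condP at h1
    rcases div_eq_zero_iff.mp h1 with h | h
    · exact h
    · exact absurd h d0pos.ne'
  -- s a in observed terms
  have hs : ∀ a : Bool, condP μ {ω | Y0 ω = a} {ω | G ω = (0 : Fin (m+1))} =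
      (μ {ω | G ω = 0 ∧ A ω = false ∧ Y ω = a}).toReal /
        ((μ {ω | G ω = 0 ∧ A ω = false ∧ Y ω = false}).toReal +
          (μ {ω | G ω = 0 ∧ A ω = false ∧ Y ω = true}).toReal) := by
    intro a
    have hnum : (μ ({ω | Y0 ω = a} ∩ {ω | G ω = (0 : Fin (m+1))})).toReal =
        (μ {ω | G ω = 0 ∧ A ω = false ∧ Y ω = a}).toReal := by
      rw [toReal_split μ hAmeas ((mY0 a).inter (mG 0))]
      have eT : (μ ({ω | A ω = true} ∩ ({ω | Y0 ω = a} ∩ {ω | G ω = (0 : Fin (m+1))}))).toReal = 0 := by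
        refine le_antisymm ?_ ENNReal.toReal_nonneg
        rw [← hAT0]
        refine ENNReal.toReal_mono (measure_ne_top μ _) (measure_mono ?_)
        intro ω hω; exact ⟨hω.1, hω.2.2⟩
      have eF : {ω | A ω = false} ∩ ({ω | Y0 ω = a} ∩ {ω | G ω = (0 : Fin (m+1))}) =
          {ω | G ω = 0 ∧ A ω = false ∧ Y ω = a} := by
        rw [← hsetF 0 a]; ext ω; simp only [Set.mem_inter_iff, Set.mem_setOf_eq] <;> tauto
      rw [eT, eF, add_zero]
    have hden : (μ {ω | G ω = (0 : Fin (m+1))}).toReal =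
        (μ {ω | G ω = 0 ∧ A ω = false ∧ Y ω = false}).toReal +
          (μ {ω | G ω = 0 ∧ A ω = false ∧ Y ω = true}).toReal := by
      rw [toReal_split μ hAmeas (mG 0), hAT0, add_zero]
      rw [toReal_split μ hY0meas ((mA false).inter (mG 0))]
      have eF : {ω | Y0 ω = false} ∩ ({ω | A ω = false} ∩ {ω | G ω = (0 : Fin (m+1))}) =
          {ω | G ω = 0 ∧ A ω = false ∧ Y ω = false} := by
        rw [← hsetF 0 false]; ext ω; simp only [Set.mem_inter_iff, Set.mem_setOf_eq] <;> tauto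
      have eT : {ω | Y0 ω = true} ∩ ({ω | A ω = false} ∩ {ω | G ω = (0 : Fin (m+1))}) =
          {ω | G ω = 0 ∧ A ω = false ∧ Y ω = true} := by
        rw [← hsetF 0 true]; ext ω; simp only [Set.mem_inter_iff, Set.mem_setOf_eq] <;> tauto
      rw [eF, eT]
    unfold condP
    rw [hnum, hden]
  intro a b
  rw [hmix 0 a b, hs a]

/-- **Corollary 1 (control-only target population).** The trial indicator takes values in
`{0, 1, ..., m}` where `g = 0` indexes the target population. Under Assumption 1 for the trials
`g ∈ {1,...,m}`, Assumption 2 for all `g`, Assumption 3 (the target population only contains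
control units), and Condition 1 restricted to the trials, the joint distribution
`P(Y⁰, Y¹ | G = 0)` on the target population is identified from the observed data. -/
theorem stmt2
    {Ω Ω' : Type*} [MeasurableSpace Ω] [MeasurableSpace Ω']
    (μ : Measure Ω) (μ' : Measure Ω')
    [IsProbabilityMeasure μ] [IsProbabilityMeasure μ']
    {m : ℕ} (hm : 1 ≤ m)
    (G : Ω → Fin (m + 1)) (A Y0 Y1 Y : Ω → Bool)
    (G' : Ω' → Fin (m + 1)) (A' Y0' Y1' Y' : Ω' → Bool)
    (hGmeas : Measurable G) (hAmeas : Measurable A)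
    (hY0meas : Measurable Y0) (hY1meas : Measurable Y1)
    (hG'meas : Measurable G') (hA'meas : Measurable A')
    (hY0'meas : Measurable Y0') (hY1'meas : Measurable Y1')
    (hYdef : ∀ ω, Y ω = bif A ω then Y1 ω else Y0 ω)
    (hY'def : ∀ ω, Y' ω = bif A' ω then Y1' ω else Y0' ω)
    -- Assumption 1 for each trial g ∈ {1, ..., m}, for μ
    (hA1pos : ∀ g : Fin (m + 1), g ≠ 0 → 0 < μ {ω | G ω = g})
    (hA1ov : ∀ g : Fin (m + 1), g ≠ 0 → 0 < condP μ {ω | A ω = true} {ω | G ω = g} ∧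
        condP μ {ω | A ω = true} {ω | G ω = g} < 1)
    (hA1ind : ∀ g : Fin (m + 1), g ≠ 0 → ∀ (a y0 y1 : Bool),
      condP μ {ω | A ω = a ∧ Y0 ω = y0 ∧ Y1 ω = y1} {ω | G ω = g} =
        condP μ {ω | A ω = a} {ω | G ω = g} *
          condP μ {ω | Y0 ω = y0 ∧ Y1 ω = y1} {ω | G ω = g})
    -- Assumption 1 for each trial g ∈ {1, ..., m}, for μ'
    (hA1pos' : ∀ g : Fin (m + 1), g ≠ 0 → 0 < μ' {ω | G' ω = g})
    (hA1ov' : ∀ g : Fin (m + 1), g ≠ 0 → 0 < condP μ' {ω | A' ω = true} {ω | G' ω = g} ∧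
        condP μ' {ω | A' ω = true} {ω | G' ω = g} < 1)
    (hA1ind' : ∀ g : Fin (m + 1), g ≠ 0 → ∀ (a y0 y1 : Bool),
      condP μ' {ω | A' ω = a ∧ Y0' ω = y0 ∧ Y1' ω = y1} {ω | G' ω = g} =
        condP μ' {ω | A' ω = a} {ω | G' ω = g} *
          condP μ' {ω | Y0' ω = y0 ∧ Y1' ω = y1} {ω | G' ω = g})
    -- Assumption 2 for every g ∈ {0, 1, ..., m}, for μ
    (hA2pos : ∀ a : Bool, 0 < μ {ω | Y0 ω = a})
    (hA2 : ∀ (a b : Bool) (g : Fin (m + 1)), 0 < μ {ω | Y0 ω = a ∧ G ω = g} →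
      condP μ {ω | Y1 ω = b} {ω | Y0 ω = a ∧ G ω = g} =
        condP μ {ω | Y1 ω = b} {ω | Y0 ω = a})
    -- Assumption 2 for every g ∈ {0, 1, ..., m}, for μ'
    (hA2pos' : ∀ a : Bool, 0 < μ' {ω | Y0' ω = a})
    (hA2' : ∀ (a b : Bool) (g : Fin (m + 1)), 0 < μ' {ω | Y0' ω = a ∧ G' ω = g} →
      condP μ' {ω | Y1' ω = b} {ω | Y0' ω = a ∧ G' ω = g} =
        condP μ' {ω | Y1' ω = b} {ω | Y0' ω = a})
    -- Assumption 3 (control-only target population), for μ and μ'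
    (hA3pos : 0 < μ {ω | G ω = 0}) (hA3 : condP μ {ω | A ω = false} {ω | G ω = 0} = 1)
    (hA3pos' : 0 < μ' {ω | G' ω = 0}) (hA3' : condP μ' {ω | A' ω = false} {ω | G' ω = 0} = 1)
    -- Condition 1 restricted to the trials g ∈ {1, ..., m}, for μ and μ'
    (hC1 : (Matrix.of fun (g : Fin m) (a : Bool) =>
      condP μ {ω | Y0 ω = a} {ω | G ω = g.succ}).rank = 2)
    (hC1' : (Matrix.of fun (g : Fin m) (a : Bool) =>
      condP μ' {ω | Y0' ω = a} {ω | G' ω = g.succ}).rank = 2)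
    -- equal observed data distributions
    (hobs : ∀ (g : Fin (m + 1)) (a y : Bool),
      μ {ω | G ω = g ∧ A ω = a ∧ Y ω = y} = μ' {ω | G' ω = g ∧ A' ω = a ∧ Y' ω = y}) :
    ∀ a b : Bool,
      condP μ {ω | Y0 ω = a ∧ Y1 ω = b} {ω | G ω = 0} =
        condP μ' {ω | Y0' ω = a ∧ Y1' ω = b} {ω | G' ω = 0} := by
  obtain ⟨hp, hr, ht⟩ := identify μ G A Y0 Y1 Y hGmeas hAmeas hY0meas hY1meas hYdef
    hA1pos hA1ov hA1ind hA2 hA3pos hA3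
  obtain ⟨hp', hr', ht'⟩ := identify μ' G' A' Y0' Y1' Y' hG'meas hA'meas hY0'meas hY1'meas hY'def
    hA1pos' hA1ov' hA1ind' hA2' hA3pos' hA3'
  have hobsR : ∀ (g : Fin (m + 1)) (a y : Bool),
      (μ {ω | G ω = g ∧ A ω = a ∧ Y ω = y}).toReal =
        (μ' {ω | G' ω = g ∧ A' ω = a ∧ Y' ω = y}).toReal := by
    intro g a y; rw [hobs g a y]
  -- p identified
  have hpeq : ∀ g : Fin (m + 1), g ≠ 0 → ∀ a : Bool,
      condP μ {ω | Y0 ω = a} {ω | G ω = g} = condP μ' {ω | Y0' ω = a} {ω | G' ω = g} := by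
    intro g hg a
    rw [hp g hg a, hp' g hg a, hobsR g false a, hobsR g false false, hobsR g false true]
  -- q identified via the rank condition
  have hq : ∀ a b : Bool,
      condP μ {ω | Y1 ω = b} {ω | Y0 ω = a} = condP μ' {ω | Y1' ω = b} {ω | Y0' ω = a} := by
    have hinj := rank2_inj _ hC1
    intro a b
    have hv : (Matrix.of fun (g : Fin m) (a : Bool) =>
        condP μ {ω | Y0 ω = a} {ω | G ω = g.succ}).mulVec
          (fun a => condP μ {ω | Y1 ω = b} {ω | Y0 ω = a}) =
      (Matrix.of fun (g : Fin m) (a : Bool) =>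
        condP μ {ω | Y0 ω = a} {ω | G ω = g.succ}).mulVec
          (fun a => condP μ' {ω | Y1' ω = b} {ω | Y0' ω = a}) := by
      funext g
      have hg : (g.succ : Fin (m + 1)) ≠ 0 := Fin.succ_ne_zero g
      have e1 := hr g.succ hg b
      have e2 := hr' g.succ hg b
      rw [← hpeq g.succ hg false, ← hpeq g.succ hg true, ← hobsR g.succ true b,
        ← hobsR g.succ true false, ← hobsR g.succ true true] at e2
      simp only [Matrix.mulVec, dotProduct, Fintype.sum_bool, Matrix.of_apply]
      linarith
    have := hinj hv
    exact congrFun this a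
  intro a b
  rw [ht a b, ht' a b, hq a b, hobsR 0 false a, hobsR 0 false false, hobsR 0 false true]
end

section
/- Consistency of the least-squares estimator (first part of Theorem 2 on estimation): Assume the model satisfies Assumption 1, Assumption 2, and Condition 1, and set θ := (π₁₍₀₎, π₁₍₁₎) where π₁₍ₐ₎ = P(Y¹=1 | Y⁰=a). Let (Gᵢ, Aᵢ, Yᵢ), i ∈ ℕ, be an i.i.d. sequence with the law of (G, A, Y) under μ, defined on some probability space. For n ∈ ℕ and g ∈ Fin m define the empirical frequencies Ŷ_g(n) := #{i < n : Yᵢ=1, Gᵢ=g, Aᵢ=1} / #{i < n : Gᵢ=g, Aᵢ=1} and X̂_g(n) := ( #{i < n : Yᵢ=0, Gᵢ=g, Aᵢ=0} / #{i < n : Gᵢ=g, Aᵢ=0}, #{i < n : Yᵢ=1, Gᵢ=g, Aᵢ=0} / #{i < n : Gᵢ=g, Aᵢ=0} ) ∈ ℝ² (each ratio set to 0 when its denominator is 0), and the estimator θ̂ₙ := (Σ_{g} X̂_g(n) X̂_g(n)ᵀ)⁻¹ · Σ_{g} X̂_g(n) Ŷ_g(n), where the inverse is taken to be 0 when the 2×2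 matrix is singular. Then almost surely θ̂ₙ → θ as n → ∞. -/
/-!
By the strong law of large numbers every empirical ratio in `θ̂ₙ` converges almost surely to the
corresponding ratio of probabilities. Within trial `g` the treatment is independent of
`(Y⁰, Y¹)`, so the control-arm frequencies converge to `x_g = (P(Y⁰ = 0 | g), P(Y⁰ = 1 | g))`
and the treated-arm frequency to `P(Y¹ = 1 | g)`, which by transportability equals `x_g ⬝ θ`.
Hence the normal equations converge to `(∑ x_g x_gᵀ) θ = ∑ (x_g ⬝ θ) x_g`; by Condition 1 the
Gram matrix `∑ x_g x_gᵀ = XᵀX` is invertible, and matrix inversion is continuous there.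
-/

open MeasureTheory ProbabilityTheory Filter Matrix

open Topology Finset

theorem tendsto_div_of_tendsto_div_natCast {a b : ℕ → ℝ} {La Lb : ℝ}
    (ha : Tendsto (fun n => a n / n) atTop (𝓝 La)) (hb : Tendsto (fun n => b n / n) atTop (𝓝 Lb))
    (hLb : Lb ≠ 0) : Tendsto (fun n => a n / b n) atTop (𝓝 (La / Lb)) := by
  refine (ha.div hb hLb).congr' ?_
  filter_upwards [eventually_ne_atTop 0] with n hn
  exact div_div_div_cancel_right₀ (Nat.cast_ne_zero.mpr hn) _ _

section Frequencies

variable {Ω S : Type*} [MeasurableSpace Ω] [MeasurableSpace S] {ν : Measure Ω}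
  [IsFiniteMeasure ν] {Z : ℕ → Ω → S}

theorem ae_tendsto_card_filter_div (hindep : Pairwise fun i j => IndepFun (Z i) (Z j) ν)
    (hident : ∀ i, IdentDistrib (Z i) (Z 0) ν ν) {p : S → Prop} [DecidablePred p]
    (hp : MeasurableSet {x | p x}) :
    ∀ᵐ ω ∂ν, Tendsto (fun n : ℕ => (#{i ∈ range n | p (Z i ω)} : ℝ) / n) atTop
      (𝓝 ((ν.map (Z 0)).real {x | p x})) := by
  have hf : Measurable ({x | p x}.indicator (1 : S → ℝ)) := measurable_const.indicator hp
  have hmean : ∫ ω, {x | p x}.indicator 1 (Z 0 ω) ∂ν = (ν.map (Z 0)).real {x | p x} := by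
    rw [← integral_map (hident 0).aemeasurable_fst hf.aestronglyMeasurable,
      integral_indicator_one hp]
  have hslln := strong_law_ae_real (fun i => {x | p x}.indicator 1 ∘ Z i)
    ((integrable_const 1).indicator hp |>.comp_aemeasurable (hident 0).aemeasurable_fst)
    (fun i j hij => (hindep hij).comp hf hf) (fun i => (hident i).comp hf)
  filter_upwards [hslln] with ω hω
  convert hω using 2 with n
  · simp only [Finset.natCast_card_filter, Function.comp_apply, Set.indicator_apply,
      Set.mem_ofPred_eq, Pi.one_apply]
  · exact hmean.symm

theorem ae_tendsto_card_filter_div_card_filter {Ω' : Type*} [MeasurableSpace Ω']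
    {μ : Measure Ω'} {W : Ω' → S} (hW : Measurable W) (hZ : ∀ i, Measurable (Z i))
    (hindep : iIndepFun Z ν) (hlaw : ∀ i, ν.map (Z i) = μ.map W) {p q : S → Prop}
    [DecidablePred p] [DecidablePred q] (hp : MeasurableSet {x | p x})
    (hq : MeasurableSet {x | q x}) (hq₀ : μ.real {ω | q (W ω)} ≠ 0) :
    ∀ᵐ ω ∂ν, Tendsto (fun n : ℕ => (#{i ∈ range n | p (Z i ω)} : ℝ) / #{i ∈ range n | q (Z i ω)})
      atTop (𝓝 (μ.real {ω | p (W ω)} / μ.real {ω | q (W ω)})) := by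
  have hident : ∀ i, IdentDistrib (Z i) (Z 0) ν ν := fun i =>
    ⟨(hZ i).aemeasurable, (hZ 0).aemeasurable, (hlaw i).trans (hlaw 0).symm⟩
  have hpair : Pairwise fun i j => IndepFun (Z i) (Z j) ν := fun i j hij => hindep.indepFun hij
  filter_upwards [ae_tendsto_card_filter_div hpair hident hp,
    ae_tendsto_card_filter_div hpair hident hq] with ω hpω hqω
  rw [hlaw 0, map_measureReal_apply hW hp] at hpω
  rw [hlaw 0, map_measureReal_apply hW hq] at hqω
  exact tendsto_div_of_tendsto_div_natCast hpω hqω hq₀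

end Frequencies

section LeastSquares

variable {ι κ 𝕜 : Type*} [Fintype ι]

theorem sum_vecMulVec_self_eq_transpose_mul_self [CommSemiring 𝕜] (x : ι → κ → 𝕜) :
    ∑ i, vecMulVec (x i) (x i) = (of x)ᵀ * of x := by
  ext j k
  simp [mul_apply, vecMulVec_apply, Matrix.sum_apply]

theorem sum_dotProduct_smul_eq_mulVec [Fintype κ] [CommSemiring 𝕜] (x : ι → κ → 𝕜) (θ : κ → 𝕜) :
    ∑ i, (x i ⬝ᵥ θ) • x i = (∑ i, vecMulVec (x i) (x i)) *ᵥ θ := by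
  ext j
  simp only [Finset.sum_apply, Pi.smul_apply, smul_eq_mul, mulVec, dotProduct, Matrix.sum_apply,
    vecMulVec_apply, Finset.sum_mul]
  rw [Finset.sum_comm]
  exact Finset.sum_congr rfl fun k _ => Finset.sum_congr rfl fun i _ => by ring

theorem isUnit_det_transpose_mul_self [Fintype κ] [DecidableEq κ] [Field 𝕜] [LinearOrder 𝕜]
    [IsStrictOrderedRing 𝕜] {X : Matrix ι κ 𝕜} (hX : X.rank = Fintype.card κ) :
    IsUnit (Xᵀ * X).det := by
  rw [← isUnit_iff_isUnit_det, ← mulVec_surjective_iff_isUnit]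
  have hrange : LinearMap.range (Xᵀ * X).mulVecLin = ⊤ := by
    refine Submodule.eq_top_of_finrank_eq ?_
    rw [Module.finrank_fintype_fun_eq_card, ← hX, ← rank_transpose_mul_self]
    rfl
  exact LinearMap.range_eq_top.mp hrange

theorem tendsto_inv_mulVec [Fintype κ] [DecidableEq κ] [Field 𝕜] [TopologicalSpace 𝕜]
    [IsTopologicalDivisionRing 𝕜] {α : Type*} {l : Filter α} {M : α → Matrix κ κ 𝕜}
    {v : α → κ → 𝕜} {M₀ : Matrix κ κ 𝕜} {v₀ : κ → 𝕜} (hM : Tendsto M l (𝓝 M₀))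
    (hv : Tendsto v l (𝓝 v₀)) (hM₀ : IsUnit M₀.det) :
    Tendsto (fun n => (M n)⁻¹ *ᵥ v n) l (𝓝 (M₀⁻¹ *ᵥ v₀)) := by
  have hinv : ContinuousAt Inv.inv M₀ := continuousAt_matrix_inv M₀ <| by
    simpa [Ring.inverse_eq_inv'] using continuousAt_inv₀ hM₀.ne_zero
  exact ((continuous_fst.matrix_mulVec continuous_snd).tendsto _).comp
    ((hinv.tendsto.comp hM).prodMk_nhds hv)

theorem tendsto_leastSquares [Fintype κ] [DecidableEq κ] [Field 𝕜] [TopologicalSpace 𝕜]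
    [IsTopologicalDivisionRing 𝕜] {α : Type*} {l : Filter α} {X : ι → α → κ → 𝕜}
    {y : ι → α → 𝕜} {x : ι → κ → 𝕜} {θ : κ → 𝕜}
    (hX : ∀ i, Tendsto (X i) l (𝓝 (x i))) (hy : ∀ i, Tendsto (y i) l (𝓝 (x i ⬝ᵥ θ)))
    (hx : IsUnit (∑ i, vecMulVec (x i) (x i)).det) :
    Tendsto (fun n => (∑ i, vecMulVec (X i n) (X i n))⁻¹ *ᵥ ∑ i, y i n • X i n) l (𝓝 θ) := by
  have hgram : Tendsto (fun n => ∑ i, vecMulVec (X i n) (X i n)) l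
      (𝓝 (∑ i, vecMulVec (x i) (x i))) :=
    tendsto_finsetSum _ fun i _ =>
      ((continuous_fst.matrix_vecMulVec continuous_snd).tendsto _).comp ((hX i).prodMk_nhds (hX i))
  have hmoment : Tendsto (fun n => ∑ i, y i n • X i n) l (𝓝 (∑ i, (x i ⬝ᵥ θ) • x i)) :=
    tendsto_finsetSum _ fun i _ => (hy i).smul (hX i)
  rw [sum_dotProduct_smul_eq_mulVec] at hmoment
  simpa [mulVec_mulVec, nonsing_inv_mul _ hx] using tendsto_inv_mulVec hgram hmoment hx

end LeastSquares

section Conditioning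

variable {Ω α β : Type*} [MeasurableSpace Ω] [MeasurableSpace α] [MeasurableSpace β]
  {μ : Measure Ω} {F : Set Ω}

theorem condP_eq_cond_real (hF : MeasurableSet F) (E : Set Ω) : condP μ E F = μ[|F].real E := by
  rw [condP, measureReal_def, cond_apply hF, ENNReal.toReal_mul, ENNReal.toReal_inv,
    Set.inter_comm, div_eq_inv_mul]

theorem indepFun_of_measureReal_preimage_singleton [IsFiniteMeasure μ]
    [Countable α] [Countable β] [MeasurableSingletonClass α] [MeasurableSingletonClass β]
    {X : Ω → α} {W : Ω → β} (hX : Measurable X) (hW : Measurable W)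
    (h : ∀ a b, μ.real (X ⁻¹' {a} ∩ W ⁻¹' {b}) = μ.real (X ⁻¹' {a}) * μ.real (W ⁻¹' {b})) :
    IndepFun X W μ := by
  rw [indepFun_iff_map_prod_eq_prod_map_map hX.aemeasurable hW.aemeasurable]
  refine Measure.ext_of_singleton fun ⟨a, b⟩ => ?_
  rw [← Set.singleton_prod_singleton, Measure.prod_prod, Measure.map_apply (hX.prodMk hW)
    (.of_discrete), Measure.map_apply hX (.singleton a), Measure.map_apply hW (.singleton b),
    Set.mk_preimage_prod, ← ENNReal.toReal_eq_toReal_iff' (measure_ne_top _ _)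
    (ENNReal.mul_ne_top (measure_ne_top _ _) (measure_ne_top _ _)), ENNReal.toReal_mul]
  exact h a b

theorem measureReal_inter_eq_mul_cond_real [IsFiniteMeasure μ] (hF : MeasurableSet F) (E : Set Ω) :
    μ.real (F ∩ E) = μ.real F * μ[|F].real E := by
  rw [measureReal_def, ← cond_mul_eq_inter hF, ENNReal.toReal_mul, mul_comm]
  rfl

theorem measureReal_inter_div_eq_cond_real_of_indepFun [IsFiniteMeasure μ] (hF : MeasurableSet F)
    {X : Ω → α} {W : Ω → β} (h : IndepFun X W μ[|F]) {s : Set α} {t : Set β}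
    (hs : MeasurableSet s) (ht : MeasurableSet t) (hFs : μ.real (F ∩ X ⁻¹' s) ≠ 0) :
    μ.real (F ∩ (X ⁻¹' s ∩ W ⁻¹' t)) / μ.real (F ∩ X ⁻¹' s) = μ[|F].real (W ⁻¹' t) := by
  rw [measureReal_inter_eq_mul_cond_real hF] at hFs ⊢
  obtain ⟨hF₀, hXs⟩ := mul_ne_zero_iff.mp hFs
  have hfactor : μ[|F].real (X ⁻¹' s ∩ W ⁻¹' t) = μ[|F].real (X ⁻¹' s) * μ[|F].real (W ⁻¹' t) := by
    simp only [measureReal_def, h.measure_inter_preimage_eq_mul s t hs ht, ENNReal.toReal_mul]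
  rw [measureReal_inter_eq_mul_cond_real hF, hfactor]
  field_simp

theorem cond_cond_real_mul_eq_of_condP_eq [IsFiniteMeasure μ] {S t : Set Ω} {c : ℝ}
    (hF : MeasurableSet F) (hS : MeasurableSet S) (h : 0 < μ (S ∩ F) → condP μ t (S ∩ F) = c) :
    μ[|F][|S].real t * μ[|F].real S = c * μ[|F].real S := by
  by_cases hS₀ : μ[|F] S = 0
  · simp [measureReal_def, hS₀]
  have hpos : 0 < μ (S ∩ F) := by
    rw [Set.inter_comm]
    exact inter_pos_of_cond_ne_zero hF hS₀
  rw [cond_cond_eq_cond_inter hF hS, ← condP_eq_cond_real (hF.inter hS), Set.inter_comm,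
    h hpos]

end Conditioning

section Model

variable {Ω ι : Type*} [MeasurableSpace Ω] [MeasurableSpace ι] [MeasurableSingletonClass ι]
  {μ : Measure Ω} [IsFiniteMeasure μ] {G : Ω → ι} {A Y0 Y1 Y : Ω → Bool} {g : ι}

theorem measurable_of_eq_cond (hA : Measurable A) (hY0 : Measurable Y0) (hY1 : Measurable Y1)
    (hY : ∀ ω, Y ω = bif A ω then Y1 ω else Y0 ω) : Measurable Y := by
  rw [show Y = _ from funext hY]
  exact (measurable_of_countable fun b : Bool × Bool × Bool => bif b.1 then b.2.2 else b.2.1).comp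
    (hA.prodMk (hY0.prodMk hY1))

theorem indepFun_cond_of_condP_eq_mul (hG : Measurable G) (hA : Measurable A)
    (hY0 : Measurable Y0) (hY1 : Measurable Y1) (hg : μ {ω | G ω = g} ≠ 0)
    (hind : ∀ a y0 y1 : Bool, condP μ {ω | A ω = a ∧ Y0 ω = y0 ∧ Y1 ω = y1} {ω | G ω = g} =
      condP μ {ω | A ω = a} {ω | G ω = g} * condP μ {ω | Y0 ω = y0 ∧ Y1 ω = y1} {ω | G ω = g}) :
    IndepFun A (fun ω => (Y0 ω, Y1 ω)) μ[|{ω | G ω = g}] := by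
  have := cond_isProbabilityMeasure hg
  refine indepFun_of_measureReal_preimage_singleton hA (hY0.prodMk hY1) fun a ⟨y0, y1⟩ => ?_
  have hF : MeasurableSet {ω | G ω = g} := hG (.singleton g)
  have h := hind a y0 y1
  simp only [condP_eq_cond_real hF] at h
  convert h using 3 <;> ext ω <;> simp

theorem measureReal_stratum_arm_pos (hG : Measurable G) (hA : Measurable A)
    (hg : 0 < μ {ω | G ω = g}) (hov : 0 < condP μ {ω | A ω = true} {ω | G ω = g} ∧
      condP μ {ω | A ω = true} {ω | G ω = g} < 1) (a : Bool) :
    0 < μ.real {ω | G ω = g ∧ A ω = a} := by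
  have := cond_isProbabilityMeasure hg.ne'
  have hF : MeasurableSet {ω | G ω = g} := hG (.singleton g)
  have hAt : MeasurableSet {ω | A ω = true} := hA (.singleton true)
  rw [condP_eq_cond_real hF] at hov
  have harm : 0 < μ[|{ω | G ω = g}].real {ω | A ω = a} := by
    cases a
    · have hcompl : {ω | A ω = false} = {ω | A ω = true}ᶜ := by ext ω; simp
      rw [hcompl, probReal_compl_eq_one_sub hAt]
      linarith [hov.2]
    · exact hov.1
  have hstratum : {ω | G ω = g ∧ A ω = a} = {ω | G ω = g} ∩ {ω | A ω = a} := rfl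
  rw [hstratum, measureReal_inter_eq_mul_cond_real hF]
  exact mul_pos (ENNReal.toReal_pos hg.ne' (measure_ne_top _ _)) harm

theorem measureReal_arm_div_eq_condP (hG : Measurable G)
    (hY : ∀ ω, Y ω = bif A ω then Y1 ω else Y0 ω)
    (hind : IndepFun A (fun ω => (Y0 ω, Y1 ω)) μ[|{ω | G ω = g}]) {a : Bool}
    (ha : μ.real {ω | G ω = g ∧ A ω = a} ≠ 0) (y : Bool) :
    μ.real {ω | G ω = g ∧ A ω = a ∧ Y ω = y} / μ.real {ω | G ω = g ∧ A ω = a} =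
      condP μ {ω | (bif a then Y1 ω else Y0 ω) = y} {ω | G ω = g} := by
  have hF : MeasurableSet {ω | G ω = g} := hG (.singleton g)
  have houtcome : Measurable fun p : Bool × Bool => bif a then p.2 else p.1 :=
    measurable_of_countable _
  have h := measureReal_inter_div_eq_cond_real_of_indepFun hF
    (hind.comp measurable_id houtcome) (.singleton a) (.singleton y) ha
  rw [condP_eq_cond_real hF]
  convert h using 3
  · ext ω
    simp only [Set.mem_ofPred_eq, Set.mem_inter_iff, Set.mem_preimage, Set.mem_singleton_iff,
      Function.comp_apply, id, hY]
    constructor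
    · rintro ⟨hg, rfl, rfl⟩
      exact ⟨hg, rfl, rfl⟩
    · rintro ⟨hg, rfl, hy⟩
      exact ⟨hg, rfl, hy⟩
  · rfl
  · rfl

theorem condP_Y1_eq_of_transport (hG : Measurable G) (hY0 : Measurable Y0)
    (htrans : ∀ a : Bool, 0 < μ {ω | Y0 ω = a ∧ G ω = g} →
      condP μ {ω | Y1 ω = true} {ω | Y0 ω = a ∧ G ω = g} =
        condP μ {ω | Y1 ω = true} {ω | Y0 ω = a}) :
    condP μ {ω | Y1 ω = true} {ω | G ω = g} =
      condP μ {ω | Y1 ω = true} {ω | Y0 ω = false} * condP μ {ω | Y0 ω = false} {ω | G ω = g} +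
      condP μ {ω | Y1 ω = true} {ω | Y0 ω = true} * condP μ {ω | Y0 ω = true} {ω | G ω = g} := by
  have hF : MeasurableSet {ω | G ω = g} := hG (.singleton g)
  have hS : ∀ a, MeasurableSet {ω | Y0 ω = a} := fun a => hY0 (.singleton a)
  have hcompl : {ω | Y0 ω = true}ᶜ = {ω | Y0 ω = false} := by ext ω; simp
  have htotal := congrArg ENNReal.toReal <|
    cond_add_cond_compl_eq (t := {ω | Y1 ω = true}) (hS true) μ[|{ω | G ω = g}]
  rw [hcompl, ENNReal.toReal_add (by finiteness) (by finiteness), ENNReal.toReal_mul,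
    ENNReal.toReal_mul] at htotal
  simp only [← measureReal_def] at htotal
  rw [condP_eq_cond_real hF, ← htotal, condP_eq_cond_real hF, condP_eq_cond_real hF,
    cond_cond_real_mul_eq_of_condP_eq hF (hS true) (htrans true),
    cond_cond_real_mul_eq_of_condP_eq hF (hS false) (htrans false), add_comm]

theorem ae_tendsto_arm_frequency [DecidableEq ι] {Ω₂ : Type*} [MeasurableSpace Ω₂]
    {ν : Measure Ω₂} [IsFiniteMeasure ν] {Z : ℕ → Ω₂ → ι × Bool × Bool} (hG : Measurable G)
    (hA : Measurable A) (hY0 : Measurable Y0) (hY1 : Measurable Y1)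
    (hY : ∀ ω, Y ω = bif A ω then Y1 ω else Y0 ω)
    (hind : IndepFun A (fun ω => (Y0 ω, Y1 ω)) μ[|{ω | G ω = g}]) {a : Bool}
    (ha : μ.real {ω | G ω = g ∧ A ω = a} ≠ 0) (hZ : ∀ i, Measurable (Z i))
    (hZindep : iIndepFun Z ν) (hZlaw : ∀ i, ν.map (Z i) = μ.map fun ω => (G ω, A ω, Y ω))
    (y : Bool) :
    ∀ᵐ ω ∂ν, Tendsto (fun n : ℕ => (#{i ∈ range n | Z i ω = (g, a, y)} : ℝ) /
        #{i ∈ range n | (Z i ω).1 = g ∧ (Z i ω).2.1 = a}) atTop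
      (𝓝 (condP μ {ω | (bif a then Y1 ω else Y0 ω) = y} {ω | G ω = g})) := by
  have hW : Measurable fun ω => (G ω, A ω, Y ω) :=
    hG.prodMk (hA.prodMk (measurable_of_eq_cond hA hY0 hY1 hY))
  have hq : MeasurableSet {z : ι × Bool × Bool | z.1 = g ∧ z.2.1 = a} :=
    (measurable_fst measurableSet_eq).inter (measurable_snd.fst measurableSet_eq)
  have h := ae_tendsto_card_filter_div_card_filter hW hZ hZindep hZlaw
    (measurableSet_eq (a := (g, a, y))) hq ha
  simp only [Prod.mk.injEq] at h
  rwa [measureReal_arm_div_eq_condP hG hY hind ha] at h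

end Model

theorem stmt3_general
    {Ω : Type*} [MeasurableSpace Ω] (μ : Measure Ω) [IsProbabilityMeasure μ]
    {m : ℕ}
    (G : Ω → Fin m) (A Y0 Y1 Y : Ω → Bool)
    (hGmeas : Measurable G) (hAmeas : Measurable A)
    (hY0meas : Measurable Y0) (hY1meas : Measurable Y1)
    (hYdef : ∀ ω, Y ω = bif A ω then Y1 ω else Y0 ω)
    -- Assumption 1
    (hA1pos : ∀ g : Fin m, 0 < μ {ω | G ω = g})
    (hA1ov : ∀ g : Fin m, 0 < condP μ {ω | A ω = true} {ω | G ω = g} ∧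
        condP μ {ω | A ω = true} {ω | G ω = g} < 1)
    (hA1ind : ∀ (g : Fin m) (a y0 y1 : Bool),
      condP μ {ω | A ω = a ∧ Y0 ω = y0 ∧ Y1 ω = y1} {ω | G ω = g} =
        condP μ {ω | A ω = a} {ω | G ω = g} *
          condP μ {ω | Y0 ω = y0 ∧ Y1 ω = y1} {ω | G ω = g})
    -- Assumption 2
    (hA2 : ∀ (a b : Bool) (g : Fin m), 0 < μ {ω | Y0 ω = a ∧ G ω = g} →
      condP μ {ω | Y1 ω = b} {ω | Y0 ω = a ∧ G ω = g} =
        condP μ {ω | Y1 ω = b} {ω | Y0 ω = a})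
    -- Condition 1
    (hC1 : (Matrix.of fun (g : Fin m) (a : Bool) =>
      condP μ {ω | Y0 ω = a} {ω | G ω = g}).rank = 2)
    -- the target parameter θ = (π₁₍₀₎, π₁₍₁₎)
    (θ : Fin 2 → ℝ)
    (hθ : θ = ![condP μ {ω | Y1 ω = true} {ω | Y0 ω = false},
                condP μ {ω | Y1 ω = true} {ω | Y0 ω = true}])
    -- an i.i.d. sample with the law of (G, A, Y), on some probability space (Ω₂, ν)
    {Ω₂ : Type*} [MeasurableSpace Ω₂] (ν : Measure Ω₂) [IsProbabilityMeasure ν]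
    (Z : ℕ → Ω₂ → Fin m × Bool × Bool)
    (hZmeas : ∀ i, Measurable (Z i))
    (hZindep : iIndepFun Z ν)
    (hZdist : ∀ i, ν.map (Z i) = μ.map (fun ω => (G ω, A ω, Y ω)))
    -- empirical frequencies
    (Yhat : Fin m → ℕ → Ω₂ → ℝ)
    (hYhat : ∀ (g : Fin m) (n : ℕ) (ω : Ω₂), Yhat g n ω =
      (((Finset.range n).filter (fun i => Z i ω = (g, true, true))).card : ℝ) /
      (((Finset.range n).filter (fun i => (Z i ω).1 = g ∧ (Z i ω).2.1 = true)).card : ℝ))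
    (Xhat : Fin m → ℕ → Ω₂ → Fin 2 → ℝ)
    (hXhat : ∀ (g : Fin m) (n : ℕ) (ω : Ω₂), Xhat g n ω =
      ![(((Finset.range n).filter (fun i => Z i ω = (g, false, false))).card : ℝ) /
          (((Finset.range n).filter (fun i => (Z i ω).1 = g ∧ (Z i ω).2.1 = false)).card : ℝ),
        (((Finset.range n).filter (fun i => Z i ω = (g, false, true))).card : ℝ) /
          (((Finset.range n).filter (fun i => (Z i ω).1 = g ∧ (Z i ω).2.1 = false)).card : ℝ)])
    -- the least-squares estimator
    (θhat : ℕ → Ω₂ → Fin 2 → ℝ)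
    (hθhat : ∀ (n : ℕ) (ω : Ω₂), θhat n ω =
      (∑ g : Fin m, vecMulVec (Xhat g n ω) (Xhat g n ω))⁻¹ *ᵥ
        (∑ g : Fin m, Yhat g n ω • Xhat g n ω)) :
    -- conclusion: almost sure convergence θ̂ₙ → θ
    ∀ᵐ ω ∂ν, Tendsto (fun n => θhat n ω) atTop (nhds θ) := by
  have hind g :=
    indepFun_cond_of_condP_eq_mul hGmeas hAmeas hY0meas hY1meas (hA1pos g).ne' (hA1ind g)
  have hfreq g a := ae_tendsto_arm_frequency hGmeas hAmeas hY0meas hY1meas hYdef (hind g)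
    (measureReal_stratum_arm_pos hGmeas hAmeas (hA1pos g) (hA1ov g) a).ne' hZmeas hZindep hZdist
  set x : Fin m → Fin 2 → ℝ := fun g j => condP μ {ω | Y0 ω = finTwoEquiv j} {ω | G ω = g}
  have hXlim : ∀ᵐ ω ∂ν, ∀ g, Tendsto (fun n => Xhat g n ω) atTop (𝓝 (x g)) := by
    refine ae_all_iff.2 fun g => ?_
    filter_upwards [hfreq g false false, hfreq g false true] with ω h0 h1
    simp only [hXhat]
    exact tendsto_pi_nhds.2 (Fin.forall_fin_two.2 ⟨h0, h1⟩)
  have hYlim : ∀ᵐ ω ∂ν, ∀ g, Tendsto (fun n => Yhat g n ω) atTop (𝓝 (x g ⬝ᵥ θ)) := by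
    refine ae_all_iff.2 fun g => ?_
    filter_upwards [hfreq g true true] with ω h
    convert h using 2 with n
    · exact hYhat g n ω
    · simp only [cond_true]
      rw [condP_Y1_eq_of_transport hGmeas hY0meas fun a => hA2 a true g, hθ]
      rw [dotProduct, Fin.sum_univ_two, mul_comm (x g 0), mul_comm (x g 1)]
      rfl
  have hgram : IsUnit (∑ g, vecMulVec (x g) (x g)).det := by
    have hx : of x = (of fun g a => condP μ {ω | Y0 ω = a} {ω | G ω = g}).submatrix
        (Equiv.refl _) finTwoEquiv := rfl
    rw [sum_vecMulVec_self_eq_transpose_mul_self]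
    refine isUnit_det_transpose_mul_self ?_
    rw [hx, rank_submatrix, hC1, Fintype.card_fin]
  filter_upwards [hXlim, hYlim] with ω hXω hYω
  simp only [hθhat]
  exact tendsto_leastSquares hXω hYω hgram

/-- **Consistency of the least-squares estimator** (first part of Theorem 2 on estimation).
Under Assumptions 1, 2 and Condition 1, the least-squares estimator `θ̂ₙ` computed from an
i.i.d. sample with the law of `(G, A, Y)` converges almost surely to
`θ = (P(Y¹=1 | Y⁰=0), P(Y¹=1 | Y⁰=1))`.  (In Lean, real division by zero is `0`, so the
empirical ratios are automatically `0` when their denominators vanish, and the Mathlib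
matrix inverse is `0` for singular matrices.) -/
theorem stmt3
    {Ω : Type*} [MeasurableSpace Ω] (μ : Measure Ω) [IsProbabilityMeasure μ]
    {m : ℕ} (hm : 1 ≤ m)
    (G : Ω → Fin m) (A Y0 Y1 Y : Ω → Bool)
    (hGmeas : Measurable G) (hAmeas : Measurable A)
    (hY0meas : Measurable Y0) (hY1meas : Measurable Y1)
    (hYdef : ∀ ω, Y ω = bif A ω then Y1 ω else Y0 ω)
    -- Assumption 1
    (hA1pos : ∀ g : Fin m, 0 < μ {ω | G ω = g})
    (hA1ov : ∀ g : Fin m, 0 < condP μ {ω | A ω = true} {ω | G ω = g} ∧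
        condP μ {ω | A ω = true} {ω | G ω = g} < 1)
    (hA1ind : ∀ (g : Fin m) (a y0 y1 : Bool),
      condP μ {ω | A ω = a ∧ Y0 ω = y0 ∧ Y1 ω = y1} {ω | G ω = g} =
        condP μ {ω | A ω = a} {ω | G ω = g} *
          condP μ {ω | Y0 ω = y0 ∧ Y1 ω = y1} {ω | G ω = g})
    -- Assumption 2
    (hA2pos : ∀ a : Bool, 0 < μ {ω | Y0 ω = a})
    (hA2 : ∀ (a b : Bool) (g : Fin m), 0 < μ {ω | Y0 ω = a ∧ G ω = g} →
      condP μ {ω | Y1 ω = b} {ω | Y0 ω = a ∧ G ω = g} =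
        condP μ {ω | Y1 ω = b} {ω | Y0 ω = a})
    -- Condition 1
    (hC1 : (Matrix.of fun (g : Fin m) (a : Bool) =>
      condP μ {ω | Y0 ω = a} {ω | G ω = g}).rank = 2)
    -- the target parameter θ = (π₁₍₀₎, π₁₍₁₎)
    (θ : Fin 2 → ℝ)
    (hθ : θ = ![condP μ {ω | Y1 ω = true} {ω | Y0 ω = false},
                condP μ {ω | Y1 ω = true} {ω | Y0 ω = true}])
    -- an i.i.d. sample with the law of (G, A, Y), on some probability space (Ω₂, ν)
    {Ω₂ : Type*} [MeasurableSpace Ω₂] (ν : Measure Ω₂) [IsProbabilityMeasure ν]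
    (Z : ℕ → Ω₂ → Fin m × Bool × Bool)
    (hZmeas : ∀ i, Measurable (Z i))
    (hZindep : iIndepFun Z ν)
    (hZdist : ∀ i, ν.map (Z i) = μ.map (fun ω => (G ω, A ω, Y ω)))
    -- empirical frequencies
    (Yhat : Fin m → ℕ → Ω₂ → ℝ)
    (hYhat : ∀ (g : Fin m) (n : ℕ) (ω : Ω₂), Yhat g n ω =
      (((Finset.range n).filter (fun i => Z i ω = (g, true, true))).card : ℝ) /
      (((Finset.range n).filter (fun i => (Z i ω).1 = g ∧ (Z i ω).2.1 = true)).card : ℝ))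
    (Xhat : Fin m → ℕ → Ω₂ → Fin 2 → ℝ)
    (hXhat : ∀ (g : Fin m) (n : ℕ) (ω : Ω₂), Xhat g n ω =
      ![(((Finset.range n).filter (fun i => Z i ω = (g, false, false))).card : ℝ) /
          (((Finset.range n).filter (fun i => (Z i ω).1 = g ∧ (Z i ω).2.1 = false)).card : ℝ),
        (((Finset.range n).filter (fun i => Z i ω = (g, false, true))).card : ℝ) /
          (((Finset.range n).filter (fun i => (Z i ω).1 = g ∧ (Z i ω).2.1 = false)).card : ℝ)])
    -- the least-squares estimator
    (θhat : ℕ → Ω₂ → Fin 2 → ℝ)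
    (hθhat : ∀ (n : ℕ) (ω : Ω₂), θhat n ω =
      (∑ g : Fin m, vecMulVec (Xhat g n ω) (Xhat g n ω))⁻¹ *ᵥ
        (∑ g : Fin m, Yhat g n ω • Xhat g n ω)) :
    -- conclusion: almost sure convergence θ̂ₙ → θ
    ∀ᵐ ω ∂ν, Tendsto (fun n => θhat n ω) atTop (nhds θ) :=
  stmt3_general μ G A Y0 Y1 Y hGmeas hAmeas hY0meas hY1meas hYdef hA1pos hA1ov hA1ind hA2 hC1 θ hθ ν
    Z hZmeas hZindep hZdist Yhat hYhat Xhat hXhat θhat hθhat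
end

section
/- Identifiability under double monotonicity with a weaker rank condition (Theorem on thm-add): Suppose two models (Ω, ℱ, μ, G, A, S⁰, S¹, Y⁰, Y¹) and (Ω', ℱ', μ', G', A', S'⁰, S'¹, Y'⁰, Y'¹) each satisfy Assumption 5, Assumption 6, the monotonicity conditions μ(Y¹ ≥ Y⁰) = 1 and μ(S¹ ≥ S⁰) = 1 (and likewise under μ'), and Condition A (both parts (i) and (ii)), and have the same observed data distribution, i.e. μ(G=g, A=a, S=s, Y=y) = μ'(G'=g, A'=a, S'=s, Y'=y) for all g ∈ Fin m and a, s, y ∈ {0,1}. Then for all a, b, c, d ∈ {0,1} and every g: P(S⁰=a, S¹=b, Y⁰=c, Y¹=d | G=g) = P'(S'⁰=a, S'¹=b, Y'⁰=c, Y'¹=d | G'=g); consequently the principal stratification average causal effects PSACE_{ab|g} are identified whenever μ(S⁰=a, S¹=b, G=g) > 0. -/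
open MeasureTheory ProbabilityTheory

/-!
Write `π g a c = P(S⁰=a, Y⁰=c | G=g)` and `q a c b d = P(S¹=b, Y¹=d | S⁰=a, Y⁰=c)`.
Randomization within trials identifies `π g` from the control arm and
`P(S¹=b, Y¹=d | G=g)` from the treated arm, and transportability factors the law of the
principal strata as `P(S⁰=a, S¹=b, Y⁰=c, Y¹=d | G=g) = π g a c * q a c b d`; summing over
`(a, c)` exhibits `P(S¹, Y¹ | G=g)` as a known mixture of the unknown rows of `q`.
Monotonicity kills `q 1 c 0 d` and `q a 1 b 0`, so each of the mixture equations for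
`(b, d) = (0,0), (0,1), (1,0)` involves at most two unknowns, with coefficient columns
those of Condition A (i) or (ii); the rank conditions identify them, and the entries with
`(b, d) = (1,1)` follow from the row sums `∑ q = 1`. Hence the joint law of
`(S⁰, S¹, Y⁰, Y¹, G)` is identified, and with it every conditional probability of events
in these variables, the principal stratum effects included.
-/

lemma Matrix.mulVec_injective_of_rank_eq {K m n : Type*} [Field K] [Fintype n]
    {M : Matrix m n K} (hM : M.rank = Fintype.card n) : Function.Injective M.mulVec :=
  Matrix.mulVec_injective_iff.mpr <| linearIndependent_iff_card_eq_finrank_span.mpr <| by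
    rw [← hM, Matrix.rank_eq_finrank_span_cols]; rfl

lemma eq_zero_of_rank_eq_two {m : ℕ} {M : Matrix (Fin m) (Fin 2) ℝ} (hM : M.rank = 2)
    {x y : ℝ} (h : ∀ g, M g 0 * x + M g 1 * y = 0) : x = 0 ∧ y = 0 := by
  have hv : ![x, y] = 0 := Matrix.mulVec_injective_of_rank_eq (by simpa using hM) <| by
    ext g; simpa [Matrix.mulVec, dotProduct, Fin.sum_univ_two, mul_comm] using h g
  simpa using hv

lemma eq_zero_of_mixture_eq_zero {m : ℕ} {π : Fin m → Bool → Bool → ℝ}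
    {r : Bool → Bool → Bool → Bool → ℝ}
    (hi : (Matrix.of fun g (j : Fin 2) => π g false (j = 1 : Bool)).rank = 2)
    (hii : (Matrix.of fun g (j : Fin 2) => π g (j = 1 : Bool) false).rank = 2)
    (hS : ∀ c d, r true c false d = 0) (hY : ∀ a b, r a true b false = 0)
    (hsum : ∀ a c, ∑ b, ∑ d, r a c b d = 0)
    (hmix : ∀ g b d, ∑ a, ∑ c, π g a c * r a c b d = 0) : ∀ a c b d, r a c b d = 0 := by
  have col := fun g b d => by simpa only [Fintype.sum_bool] using hmix g b d
  obtain ⟨h0000, -⟩ := eq_zero_of_rank_eq_two hi (x := r false false false false) (y := 0)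
    fun g => by simpa [hS, hY] using col g false false
  obtain ⟨h0001, h0101⟩ := eq_zero_of_rank_eq_two hi fun g => by
    simpa [hS, add_comm] using col g false true
  obtain ⟨h0010, h1010⟩ := eq_zero_of_rank_eq_two hii fun g => by
    simpa [hY, add_comm] using col g true false
  have rows := fun a c => by simpa only [Fintype.sum_bool] using hsum a c
  intro a c b d
  cases a <;> cases c <;> cases b <;> cases d <;>
    linarith [rows false false, rows false true, rows true false, rows true true, hS false false,
      hS false true, hS true false, hS true true, hY false false, hY false true, hY true false,
      hY true true]

lemma eq_of_mixture_eq {m : ℕ} {π : Fin m → Bool → Bool → ℝ}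
    {q q' : Bool → Bool → Bool → Bool → ℝ}
    (hi : (Matrix.of fun g (j : Fin 2) => π g false (j = 1 : Bool)).rank = 2)
    (hii : (Matrix.of fun g (j : Fin 2) => π g (j = 1 : Bool) false).rank = 2)
    (hqS : ∀ c d, q true c false d = 0) (hqY : ∀ a b, q a true b false = 0)
    (hq'S : ∀ c d, q' true c false d = 0) (hq'Y : ∀ a b, q' a true b false = 0)
    (hq : ∀ a c, ∑ b, ∑ d, q a c b d = 1) (hq' : ∀ a c, ∑ b, ∑ d, q' a c b d = 1)
    (hmix : ∀ g b d, ∑ a, ∑ c, π g a c * q a c b d = ∑ a, ∑ c, π g a c * q' a c b d) :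
    ∀ a c b d, q a c b d = q' a c b d := fun a c b d =>
  sub_eq_zero.mp <| eq_zero_of_mixture_eq_zero (r := q - q') hi hii
    (by simp [hqS, hq'S]) (by simp [hqY, hq'Y])
    (fun a c => by simp only [Pi.sub_apply, Finset.sum_sub_distrib, hq, hq', sub_self])
    (fun g b d => by simp only [Pi.sub_apply, mul_sub, Finset.sum_sub_distrib, hmix, sub_self])
    a c b d

section Measure

variable {Ω : Type*} [MeasurableSpace Ω] {μ : Measure Ω}

lemma condP_eq_sum_bool [IsFiniteMeasure μ] {f : Ω → Bool} (hf : Measurable f)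
    (E F : Set Ω) :
    condP μ E F = ∑ b, condP μ (E ∩ {ω | f ω = b}) F := by
  have htrue : E ∩ F ∩ {ω | f ω = true} = E ∩ {ω | f ω = true} ∩ F :=
    Set.inter_right_comm ..
  have hfalse : (E ∩ F) \ {ω | f ω = true} = E ∩ {ω | f ω = false} ∩ F := by
    ext ω; simp [and_right_comm]
  simp only [condP, Fintype.sum_bool, ← add_div, ← measureReal_def, ← htrue, ← hfalse]
  have ht : MeasurableSet {ω | f ω = true} := hf (measurableSet_singleton true)
  rw [measureReal_inter_add_sdiff ht]

lemma condP_self [IsFiniteMeasure μ] {F : Set Ω} (hF : μ F ≠ 0) : condP μ Set.univ F = 1 := by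
  rw [condP, Set.univ_inter]
  exact div_self (ENNReal.toReal_ne_zero.mpr ⟨hF, measure_ne_top _ _⟩)

lemma condP_of_measure_inter_eq_zero {E F : Set Ω} (h : μ (E ∩ F) = 0) : condP μ E F = 0 := by
  simp [condP, h]

lemma condP_inter_left [IsFiniteMeasure μ] (E F H : Set Ω) :
    condP μ (E ∩ F) H = condP μ E (F ∩ H) * condP μ F H := by
  rcases eq_or_ne (μ (F ∩ H)) 0 with h | h
  · have hE : μ (E ∩ F ∩ H) = 0 :=
      measure_mono_null (Set.inter_subset_inter_left _ Set.inter_subset_right) h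
    simp [condP, h, hE]
  · have hH : μ H ≠ 0 := fun h0 => h (measure_mono_null Set.inter_subset_right h0)
    simp only [condP, Set.inter_assoc]
    field_simp [ENNReal.toReal_ne_zero.mpr ⟨h, measure_ne_top _ _⟩,
      ENNReal.toReal_ne_zero.mpr ⟨hH, measure_ne_top _ _⟩]

lemma condP_mul_measureReal [IsFiniteMeasure μ] (E F : Set Ω) :
    condP μ E F * μ.real F = μ.real (E ∩ F) := by
  rcases eq_or_ne (μ F) 0 with h | h
  · have hE : μ (E ∩ F) = 0 := measure_mono_null Set.inter_subset_right h
    simp [condP, measureReal_def, h, hE]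
  · exact div_mul_cancel₀ _ (ENNReal.toReal_ne_zero.mpr ⟨h, measure_ne_top _ _⟩)

lemma sum_condP_eq_one [IsFiniteMeasure μ] {f : Ω → Bool} (hf : Measurable f) {F : Set Ω}
    (hF : μ F ≠ 0) : ∑ b, condP μ {ω | f ω = b} F = 1 := by
  simp only [← condP_self hF, condP_eq_sum_bool hf Set.univ, Set.univ_inter]

lemma condP_false_ne_zero [IsFiniteMeasure μ] {f : Ω → Bool} (hf : Measurable f) {F : Set Ω}
    (hF : μ F ≠ 0) (h : condP μ {ω | f ω = true} F < 1) : condP μ {ω | f ω = false} F ≠ 0 := by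
  have hsum := sum_condP_eq_one hf hF
  rw [Fintype.sum_bool] at hsum
  linarith

lemma sum_sum_condP_eq_one [IsFiniteMeasure μ] {f g : Ω → Bool} (hf : Measurable f)
    (hg : Measurable g) {F : Set Ω} (hF : μ F ≠ 0) :
    ∑ b, ∑ d, condP μ {ω | f ω = b ∧ g ω = d} F = 1 := by
  rw [← sum_condP_eq_one hf hF]
  exact Finset.sum_congr rfl fun b _ => (condP_eq_sum_bool hg _ _).symm

lemma condP_eq_mul_of_forall_bool [IsFiniteMeasure μ] {f : Ω → Bool} (hf : Measurable f)
    {E E' F : Set Ω} {c : ℝ}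
    (h : ∀ b, condP μ (E ∩ {ω | f ω = b}) F = c * condP μ (E' ∩ {ω | f ω = b}) F) :
    condP μ E F = c * condP μ E' F := by
  rw [condP_eq_sum_bool hf E, condP_eq_sum_bool hf E', Finset.mul_sum]
  exact Finset.sum_congr rfl fun b _ => h b

lemma condP_eq_zero_of_prob_le_eq_one [IsProbabilityMeasure μ] {f g : Ω → Bool}
    (hf : Measurable f) (hg : Measurable g) (hfg : μ {ω | f ω ≤ g ω} = 1) {E F : Set Ω}
    (hEF : E ∩ F ⊆ {ω | f ω = true ∧ g ω = false}) : condP μ E F = 0 := by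
  refine condP_of_measure_inter_eq_zero ?_
  have hle : MeasurableSet {ω | f ω ≤ g ω} :=
    hf.prodMk hg (Set.toFinite {p : Bool × Bool | p.1 ≤ p.2}).measurableSet
  refine measure_mono_null (hEF.trans ?_) ((prob_compl_eq_zero_iff hle).mpr hfg)
  rintro ω ⟨h1, h2⟩
  simp [h1, h2]

variable {Ω' α : Type*} [MeasurableSpace Ω'] [MeasurableSpace α] [Countable α]
  [MeasurableSingletonClass α] {μ' : Measure Ω'} {X : Ω → α} {X' : Ω' → α}

lemma measureReal_inter_eq_of_condP_eq [IsFiniteMeasure μ] [IsFiniteMeasure μ']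
    {E F : Set Ω} {E' F' : Set Ω'}
    (h : condP μ E F = condP μ' E' F') (hF : μ.real F = μ'.real F') :
    μ.real (E ∩ F) = μ'.real (E' ∩ F') := by
  rw [← condP_mul_measureReal, h, hF, condP_mul_measureReal]

lemma measureReal_preimage_eq_of_singleton [IsFiniteMeasure μ] [IsFiniteMeasure μ']
    (hX : Measurable X) (hX' : Measurable X')
    (h : ∀ x, μ.real (X ⁻¹' {x}) = μ'.real (X' ⁻¹' {x})) (T : Set α) :
    μ.real (X ⁻¹' T) = μ'.real (X' ⁻¹' T) := by
  have hmap : μ.map X = μ'.map X' := ext_iff_measureReal_singleton.mpr fun x => by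
    rw [map_measureReal_apply hX (measurableSet_singleton x),
      map_measureReal_apply hX' (measurableSet_singleton x), h]
  have hT : MeasurableSet T := T.to_countable.measurableSet
  rw [← map_measureReal_apply hX hT, hmap, map_measureReal_apply hX' hT]

lemma condP_preimage_eq_of_singleton [IsFiniteMeasure μ] [IsFiniteMeasure μ']
    (hX : Measurable X) (hX' : Measurable X')
    (h : ∀ x, μ.real (X ⁻¹' {x}) = μ'.real (X' ⁻¹' {x})) (T U : Set α) :
    condP μ (X ⁻¹' T) (X ⁻¹' U) = condP μ' (X' ⁻¹' T) (X' ⁻¹' U) := by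
  simp only [condP, ← measureReal_def, ← Set.preimage_inter,
    measureReal_preimage_eq_of_singleton hX hX' h]

lemma condP_preimage_prod_eq {β : Type*} [MeasurableSpace β] [Countable β]
    [MeasurableSingletonClass β] [IsFiniteMeasure μ] [IsFiniteMeasure μ'] {G : Ω → β}
    {G' : Ω' → β} (hX : Measurable X) (hX' : Measurable X') (hG : Measurable G)
    (hG' : Measurable G') (hGeq : ∀ g, μ.real (G ⁻¹' {g}) = μ'.real (G' ⁻¹' {g}))
    (h : ∀ x g, condP μ (X ⁻¹' {x}) (G ⁻¹' {g}) = condP μ' (X' ⁻¹' {x}) (G' ⁻¹' {g}))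
    (T U : Set (α × β)) :
    condP μ ((fun ω => (X ω, G ω)) ⁻¹' T) ((fun ω => (X ω, G ω)) ⁻¹' U) =
      condP μ' ((fun ω => (X' ω, G' ω)) ⁻¹' T) ((fun ω => (X' ω, G' ω)) ⁻¹' U) := by
  refine condP_preimage_eq_of_singleton (hX.prodMk hG) (hX'.prodMk hG') (fun ⟨x, g⟩ => ?_) T U
  simp only [← Set.singleton_prod_singleton, Set.mk_preimage_prod]
  exact measureReal_inter_eq_of_condP_eq (h x g) (hGeq g)

end Measure

section Model

variable {Ω : Type*} [MeasurableSpace Ω] {μ : Measure Ω} {m : ℕ}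
  {G : Ω → Fin m} {A S0 S1 Y0 Y1 S Y : Ω → Bool} {F : Set Ω}

lemma measurable_of_eq_bif (hA : Measurable A) (hS1 : Measurable S1) (hS0 : Measurable S0)
    (hS : ∀ ω, S ω = bif A ω then S1 ω else S0 ω) : Measurable S := by
  rw [funext hS]
  exact (measurable_of_finite fun p : Bool × Bool × Bool => bif p.1 then p.2.1 else p.2.2).comp
    (hA.prodMk (hS1.prodMk hS0))

lemma condP_untreated_obs_eq_mul [IsFiniteMeasure μ] (hind : ∀ a s0 s1 y0 y1 : Bool,
      condP μ {ω | A ω = a ∧ S0 ω = s0 ∧ S1 ω = s1 ∧ Y0 ω = y0 ∧ Y1 ω = y1} F =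
        condP μ {ω | A ω = a} F *
          condP μ {ω | S0 ω = s0 ∧ S1 ω = s1 ∧ Y0 ω = y0 ∧ Y1 ω = y1} F)
    (hS1 : Measurable S1) (hY1 : Measurable Y1)
    (hSdef : ∀ ω, S ω = bif A ω then S1 ω else S0 ω)
    (hYdef : ∀ ω, Y ω = bif A ω then Y1 ω else Y0 ω) (s y : Bool) :
    condP μ {ω | A ω = false ∧ S ω = s ∧ Y ω = y} F =
      condP μ {ω | A ω = false} F * condP μ {ω | S0 ω = s ∧ Y0 ω = y} F := by
  have hobs : {ω | A ω = false ∧ S ω = s ∧ Y ω = y} =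
      {ω | A ω = false} ∩ {ω | S0 ω = s ∧ Y0 ω = y} := by
    ext ω; cases h : A ω <;> simp [hSdef, hYdef, h]
  rw [hobs]
  refine condP_eq_mul_of_forall_bool hS1 fun s1 => condP_eq_mul_of_forall_bool hY1 fun y1 => ?_
  convert hind false s s1 y y1 using 3 <;> ext ω <;>
    simp only [Set.mem_inter_iff, Set.mem_ofPred_eq] <;> tauto

lemma condP_treated_obs_eq_mul [IsFiniteMeasure μ] (hind : ∀ a s0 s1 y0 y1 : Bool,
      condP μ {ω | A ω = a ∧ S0 ω = s0 ∧ S1 ω = s1 ∧ Y0 ω = y0 ∧ Y1 ω = y1} F =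
        condP μ {ω | A ω = a} F *
          condP μ {ω | S0 ω = s0 ∧ S1 ω = s1 ∧ Y0 ω = y0 ∧ Y1 ω = y1} F)
    (hS0 : Measurable S0) (hY0 : Measurable Y0)
    (hSdef : ∀ ω, S ω = bif A ω then S1 ω else S0 ω)
    (hYdef : ∀ ω, Y ω = bif A ω then Y1 ω else Y0 ω) (b d : Bool) :
    condP μ {ω | A ω = true ∧ S ω = b ∧ Y ω = d} F =
      condP μ {ω | A ω = true} F * condP μ {ω | S1 ω = b ∧ Y1 ω = d} F := by
  have hobs : {ω | A ω = true ∧ S ω = b ∧ Y ω = d} =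
      {ω | A ω = true} ∩ {ω | S1 ω = b ∧ Y1 ω = d} := by
    ext ω; cases h : A ω <;> simp [hSdef, hYdef, h]
  rw [hobs]
  refine condP_eq_mul_of_forall_bool hS0 fun s0 => condP_eq_mul_of_forall_bool hY0 fun y0 => ?_
  convert hind true s0 b y0 d using 3 <;> ext ω <;>
    simp only [Set.mem_inter_iff, Set.mem_ofPred_eq] <;> tauto

lemma condP_strata_eq_mul [IsFiniteMeasure μ] (g : Fin m)
    (htrans : ∀ a b c d : Bool, 0 < μ {ω | S0 ω = a ∧ Y0 ω = c ∧ G ω = g} →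
      condP μ {ω | S1 ω = b ∧ Y1 ω = d} {ω | S0 ω = a ∧ Y0 ω = c ∧ G ω = g} =
        condP μ {ω | S1 ω = b ∧ Y1 ω = d} {ω | S0 ω = a ∧ Y0 ω = c})
    (a b c d : Bool) :
    condP μ {ω | S0 ω = a ∧ S1 ω = b ∧ Y0 ω = c ∧ Y1 ω = d} {ω | G ω = g} =
      condP μ {ω | S0 ω = a ∧ Y0 ω = c} {ω | G ω = g} *
        condP μ {ω | S1 ω = b ∧ Y1 ω = d} {ω | S0 ω = a ∧ Y0 ω = c} := by
  have hstrata : {ω | S0 ω = a ∧ S1 ω = b ∧ Y0 ω = c ∧ Y1 ω = d} =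
      {ω | S1 ω = b ∧ Y1 ω = d} ∩ {ω | S0 ω = a ∧ Y0 ω = c} := by
    ext ω; simp only [Set.mem_inter_iff, Set.mem_ofPred_eq]; tauto
  have htrial : {ω | S0 ω = a ∧ Y0 ω = c} ∩ {ω | G ω = g} =
      {ω | S0 ω = a ∧ Y0 ω = c ∧ G ω = g} := by
    ext ω; simp only [Set.mem_inter_iff, Set.mem_ofPred_eq, and_assoc]
  rw [hstrata, condP_inter_left, htrial, mul_comm]
  rcases eq_zero_or_pos (μ {ω | S0 ω = a ∧ Y0 ω = c ∧ G ω = g}) with h | h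
  · rw [condP_of_measure_inter_eq_zero (htrial ▸ h), zero_mul, zero_mul]
  · rw [htrans a b c d h]

lemma condP_treated_eq_sum [IsFiniteMeasure μ] (hS0 : Measurable S0) (hY0 : Measurable Y0)
    (g : Fin m)
    (htrans : ∀ a b c d : Bool, 0 < μ {ω | S0 ω = a ∧ Y0 ω = c ∧ G ω = g} →
      condP μ {ω | S1 ω = b ∧ Y1 ω = d} {ω | S0 ω = a ∧ Y0 ω = c ∧ G ω = g} =
        condP μ {ω | S1 ω = b ∧ Y1 ω = d} {ω | S0 ω = a ∧ Y0 ω = c})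
    (b d : Bool) :
    condP μ {ω | S1 ω = b ∧ Y1 ω = d} {ω | G ω = g} = ∑ a, ∑ c,
      condP μ {ω | S0 ω = a ∧ Y0 ω = c} {ω | G ω = g} *
        condP μ {ω | S1 ω = b ∧ Y1 ω = d} {ω | S0 ω = a ∧ Y0 ω = c} := by
  rw [condP_eq_sum_bool hS0]
  refine Finset.sum_congr rfl fun a _ => ?_
  rw [condP_eq_sum_bool hY0]
  refine Finset.sum_congr rfl fun c _ => ?_
  rw [← condP_strata_eq_mul g htrans]
  congr 1; ext ω; simp only [Set.mem_inter_iff, Set.mem_ofPred_eq]; tauto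

lemma condP_eq_zero_of_monotone_S [IsProbabilityMeasure μ] (hS0 : Measurable S0)
    (hS1 : Measurable S1) (hmono : μ {ω | S0 ω ≤ S1 ω} = 1) (c d : Bool) :
    condP μ {ω | S1 ω = false ∧ Y1 ω = d} {ω | S0 ω = true ∧ Y0 ω = c} = 0 :=
  condP_eq_zero_of_prob_le_eq_one hS0 hS1 hmono fun _ h => ⟨h.2.1, h.1.1⟩

lemma condP_eq_zero_of_monotone_Y [IsProbabilityMeasure μ] (hY0 : Measurable Y0)
    (hY1 : Measurable Y1) (hmono : μ {ω | Y0 ω ≤ Y1 ω} = 1) (a b : Bool) :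
    condP μ {ω | S1 ω = b ∧ Y1 ω = false} {ω | S0 ω = a ∧ Y0 ω = true} = 0 :=
  condP_eq_zero_of_prob_le_eq_one hY0 hY1 hmono fun _ h => ⟨h.2.2, h.1.2⟩

end Model

theorem stmt6_general
    {Ω Ω' : Type*} [MeasurableSpace Ω] [MeasurableSpace Ω']
    (μ : Measure Ω) (μ' : Measure Ω')
    [IsProbabilityMeasure μ] [IsProbabilityMeasure μ']
    {m : ℕ}
    (G : Ω → Fin m) (A S0 S1 Y0 Y1 S Y : Ω → Bool)
    (G' : Ω' → Fin m) (A' S0' S1' Y0' Y1' S' Y' : Ω' → Bool)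
    (hGmeas : Measurable G) (hAmeas : Measurable A)
    (hS0meas : Measurable S0) (hS1meas : Measurable S1)
    (hY0meas : Measurable Y0) (hY1meas : Measurable Y1)
    (hG'meas : Measurable G') (hA'meas : Measurable A')
    (hS0'meas : Measurable S0') (hS1'meas : Measurable S1')
    (hY0'meas : Measurable Y0') (hY1'meas : Measurable Y1')
    (hSdef : ∀ ω, S ω = bif A ω then S1 ω else S0 ω)
    (hYdef : ∀ ω, Y ω = bif A ω then Y1 ω else Y0 ω)
    (hS'def : ∀ ω, S' ω = bif A' ω then S1' ω else S0' ω)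
    (hY'def : ∀ ω, Y' ω = bif A' ω then Y1' ω else Y0' ω)
    -- Assumption 5 for μ
    (hA5pos : ∀ g : Fin m, 0 < μ {ω | G ω = g})
    (hA5ov : ∀ g : Fin m, 0 < condP μ {ω | A ω = true} {ω | G ω = g} ∧
        condP μ {ω | A ω = true} {ω | G ω = g} < 1)
    (hA5ind : ∀ (g : Fin m) (a s0 s1 y0 y1 : Bool),
      condP μ {ω | A ω = a ∧ S0 ω = s0 ∧ S1 ω = s1 ∧ Y0 ω = y0 ∧ Y1 ω = y1} {ω | G ω = g} =
        condP μ {ω | A ω = a} {ω | G ω = g} *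
          condP μ {ω | S0 ω = s0 ∧ S1 ω = s1 ∧ Y0 ω = y0 ∧ Y1 ω = y1} {ω | G ω = g})
    -- Assumption 5 for μ'
    (hA5ind' : ∀ (g : Fin m) (a s0 s1 y0 y1 : Bool),
      condP μ' {ω | A' ω = a ∧ S0' ω = s0 ∧ S1' ω = s1 ∧ Y0' ω = y0 ∧ Y1' ω = y1}
          {ω | G' ω = g} =
        condP μ' {ω | A' ω = a} {ω | G' ω = g} *
          condP μ' {ω | S0' ω = s0 ∧ S1' ω = s1 ∧ Y0' ω = y0 ∧ Y1' ω = y1} {ω | G' ω = g})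
    -- Assumption 6 for μ
    (hA6pos : ∀ a c : Bool, 0 < μ {ω | S0 ω = a ∧ Y0 ω = c})
    (hA6 : ∀ (a b c d : Bool) (g : Fin m), 0 < μ {ω | S0 ω = a ∧ Y0 ω = c ∧ G ω = g} →
      condP μ {ω | S1 ω = b ∧ Y1 ω = d} {ω | S0 ω = a ∧ Y0 ω = c ∧ G ω = g} =
        condP μ {ω | S1 ω = b ∧ Y1 ω = d} {ω | S0 ω = a ∧ Y0 ω = c})
    -- Assumption 6 for μ'
    (hA6pos' : ∀ a c : Bool, 0 < μ' {ω | S0' ω = a ∧ Y0' ω = c})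
    (hA6' : ∀ (a b c d : Bool) (g : Fin m), 0 < μ' {ω | S0' ω = a ∧ Y0' ω = c ∧ G' ω = g} →
      condP μ' {ω | S1' ω = b ∧ Y1' ω = d} {ω | S0' ω = a ∧ Y0' ω = c ∧ G' ω = g} =
        condP μ' {ω | S1' ω = b ∧ Y1' ω = d} {ω | S0' ω = a ∧ Y0' ω = c})
    -- monotonicity conditions for μ and μ'
    (hmonoY : μ {ω | Y0 ω ≤ Y1 ω} = 1)
    (hmonoS : μ {ω | S0 ω ≤ S1 ω} = 1)
    (hmonoY' : μ' {ω | Y0' ω ≤ Y1' ω} = 1)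
    (hmonoS' : μ' {ω | S0' ω ≤ S1' ω} = 1)
    -- Condition A (parts (i) and (ii)) for μ and μ'
    (hCAi : (Matrix.of fun (g : Fin m) (j : Fin 2) =>
      condP μ {ω | S0 ω = false ∧ Y0 ω = (j = 1 : Bool)} {ω | G ω = g}).rank = 2)
    (hCAii : (Matrix.of fun (g : Fin m) (j : Fin 2) =>
      condP μ {ω | S0 ω = (j = 1 : Bool) ∧ Y0 ω = false} {ω | G ω = g}).rank = 2)
    -- equal observed data distributions
    (hobs : ∀ (g : Fin m) (a s y : Bool),
      μ {ω | G ω = g ∧ A ω = a ∧ S ω = s ∧ Y ω = y} =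
        μ' {ω | G' ω = g ∧ A' ω = a ∧ S' ω = s ∧ Y' ω = y}) :
    (∀ (a b c d : Bool) (g : Fin m),
      condP μ {ω | S0 ω = a ∧ S1 ω = b ∧ Y0 ω = c ∧ Y1 ω = d} {ω | G ω = g} =
        condP μ' {ω | S0' ω = a ∧ S1' ω = b ∧ Y0' ω = c ∧ Y1' ω = d} {ω | G' ω = g}) ∧
    (∀ (a b : Bool) (g : Fin m), 0 < μ {ω | S0 ω = a ∧ S1 ω = b ∧ G ω = g} →
      condP μ {ω | Y1 ω = true} {ω | S0 ω = a ∧ S1 ω = b ∧ G ω = g} -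
        condP μ {ω | Y0 ω = true} {ω | S0 ω = a ∧ S1 ω = b ∧ G ω = g} =
      condP μ' {ω | Y1' ω = true} {ω | S0' ω = a ∧ S1' ω = b ∧ G' ω = g} -
        condP μ' {ω | Y0' ω = true} {ω | S0' ω = a ∧ S1' ω = b ∧ G' ω = g}) := by
  set O := fun ω => (G ω, A ω, S ω, Y ω)
  set O' := fun ω => (G' ω, A' ω, S' ω, Y' ω)
  have hO : Measurable O := hGmeas.prodMk <| hAmeas.prodMk <|
    (measurable_of_eq_bif hAmeas hS1meas hS0meas hSdef).prodMk
      (measurable_of_eq_bif hAmeas hY1meas hY0meas hYdef)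
  have hO' : Measurable O' := hG'meas.prodMk <| hA'meas.prodMk <|
    (measurable_of_eq_bif hA'meas hS1'meas hS0'meas hS'def).prodMk
      (measurable_of_eq_bif hA'meas hY1'meas hY0'meas hY'def)
  have hlawO : ∀ x, μ.real (O ⁻¹' {x}) = μ'.real (O' ⁻¹' {x}) := by
    rintro ⟨g, a, s, y⟩
    simpa [O, O', measureReal_def, Set.preimage, Prod.ext_iff] using
      congrArg ENNReal.toReal (hobs g a s y)
  have hG : ∀ g, μ.real {ω | G ω = g} = μ'.real {ω | G' ω = g} := fun g =>
    measureReal_preimage_eq_of_singleton hO hO' hlawO {x | x.1 = g}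
  have hA : ∀ g a,
      condP μ {ω | A ω = a} {ω | G ω = g} = condP μ' {ω | A' ω = a} {ω | G' ω = g} :=
    fun g a => condP_preimage_eq_of_singleton hO hO' hlawO {x | x.2.1 = a} {x | x.1 = g}
  have hASY : ∀ g a s y, condP μ {ω | A ω = a ∧ S ω = s ∧ Y ω = y} {ω | G ω = g} =
      condP μ' {ω | A' ω = a ∧ S' ω = s ∧ Y' ω = y} {ω | G' ω = g} := fun g a s y =>
    condP_preimage_eq_of_singleton hO hO' hlawO {x | x.2.1 = a ∧ x.2.2.1 = s ∧ x.2.2.2 = y}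
      {x | x.1 = g}
  have hA1 : ∀ g, condP μ {ω | A ω = true} {ω | G ω = g} ≠ 0 := fun g => (hA5ov g).1.ne'
  have hA0 : ∀ g, condP μ {ω | A ω = false} {ω | G ω = g} ≠ 0 := fun g =>
    condP_false_ne_zero hAmeas (hA5pos g).ne' (hA5ov g).2
  have hπ : ∀ g a c, condP μ {ω | S0 ω = a ∧ Y0 ω = c} {ω | G ω = g} =
      condP μ' {ω | S0' ω = a ∧ Y0' ω = c} {ω | G' ω = g} := fun g a c =>
    mul_left_cancel₀ (hA0 g) <| by
      rw [← condP_untreated_obs_eq_mul (hA5ind g) hS1meas hY1meas hSdef hYdef, hASY, hA,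
        condP_untreated_obs_eq_mul (hA5ind' g) hS1'meas hY1'meas hS'def hY'def]
  have hρ : ∀ g b d, condP μ {ω | S1 ω = b ∧ Y1 ω = d} {ω | G ω = g} =
      condP μ' {ω | S1' ω = b ∧ Y1' ω = d} {ω | G' ω = g} := fun g b d =>
    mul_left_cancel₀ (hA1 g) <| by
      rw [← condP_treated_obs_eq_mul (hA5ind g) hS0meas hY0meas hSdef hYdef, hASY, hA,
        condP_treated_obs_eq_mul (hA5ind' g) hS0'meas hY0'meas hS'def hY'def]
  have hq : ∀ a c b d, condP μ {ω | S1 ω = b ∧ Y1 ω = d} {ω | S0 ω = a ∧ Y0 ω = c} =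
      condP μ' {ω | S1' ω = b ∧ Y1' ω = d} {ω | S0' ω = a ∧ Y0' ω = c} :=
    eq_of_mixture_eq (π := fun g a c => condP μ {ω | S0 ω = a ∧ Y0 ω = c} {ω | G ω = g})
      hCAi hCAii
      (condP_eq_zero_of_monotone_S hS0meas hS1meas hmonoS)
      (condP_eq_zero_of_monotone_Y hY0meas hY1meas hmonoY)
      (condP_eq_zero_of_monotone_S hS0'meas hS1'meas hmonoS')
      (condP_eq_zero_of_monotone_Y hY0'meas hY1'meas hmonoY')
      (fun a c => sum_sum_condP_eq_one hS1meas hY1meas (hA6pos a c).ne')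
      (fun a c => sum_sum_condP_eq_one hS1'meas hY1'meas (hA6pos' a c).ne')
      (fun g b d => by
        rw [← condP_treated_eq_sum hS0meas hY0meas g (hA6 · · · · g), hρ,
          condP_treated_eq_sum hS0'meas hY0'meas g (hA6' · · · · g)]
        simp only [hπ])
  have hstrata : ∀ g a b c d,
      condP μ {ω | S0 ω = a ∧ S1 ω = b ∧ Y0 ω = c ∧ Y1 ω = d} {ω | G ω = g} =
        condP μ' {ω | S0' ω = a ∧ S1' ω = b ∧ Y0' ω = c ∧ Y1' ω = d} {ω | G' ω = g} :=
    fun g a b c d => by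
      rw [condP_strata_eq_mul g (hA6 · · · · g), condP_strata_eq_mul g (hA6' · · · · g), hπ,
        hq]
  set V := fun ω => (S0 ω, S1 ω, Y0 ω, Y1 ω)
  set V' := fun ω => (S0' ω, S1' ω, Y0' ω, Y1' ω)
  have hlaw := condP_preimage_prod_eq (X := V) (X' := V')
    (hS0meas.prodMk <| hS1meas.prodMk <| hY0meas.prodMk hY1meas)
    (hS0'meas.prodMk <| hS1'meas.prodMk <| hY0'meas.prodMk hY1'meas) hGmeas hG'meas hG
    fun ⟨a, b, c, d⟩ g => by simpa [V, V', Set.preimage, Prod.ext_iff] using hstrata g a b c d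
  refine ⟨fun a b c d g => hlaw {w | w.1.1 = a ∧ w.1.2.1 = b ∧ w.1.2.2.1 = c ∧ w.1.2.2.2 = d}
    {w | w.2 = g}, fun a b g _ => congrArg₂ (· - ·) ?_ ?_⟩
  · exact hlaw {w | w.1.2.2.2 = true} {w | w.1.1 = a ∧ w.1.2.1 = b ∧ w.2 = g}
  · exact hlaw {w | w.1.2.2.1 = true} {w | w.1.1 = a ∧ w.1.2.1 = b ∧ w.2 = g}

/-- **Identifiability under double monotonicity with a weaker rank condition.**
Under Assumption 5, Assumption 6, the monotonicity conditions `Y¹ ≥ Y⁰` and `S¹ ≥ S⁰`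
(almost surely), and Condition A (both parts), the joint distributions
`P(S⁰, S¹, Y⁰, Y¹ | G = g)` are identified from the observed data distribution;
consequently the principal stratification average causal effects `PSACE_{ab|g}` are
identified whenever `μ(S⁰=a, S¹=b, G=g) > 0`. -/
theorem stmt6
    {Ω Ω' : Type*} [MeasurableSpace Ω] [MeasurableSpace Ω']
    (μ : Measure Ω) (μ' : Measure Ω')
    [IsProbabilityMeasure μ] [IsProbabilityMeasure μ']
    {m : ℕ} (hm : 1 ≤ m)
    (G : Ω → Fin m) (A S0 S1 Y0 Y1 S Y : Ω → Bool)
    (G' : Ω' → Fin m) (A' S0' S1' Y0' Y1' S' Y' : Ω' → Bool)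
    (hGmeas : Measurable G) (hAmeas : Measurable A)
    (hS0meas : Measurable S0) (hS1meas : Measurable S1)
    (hY0meas : Measurable Y0) (hY1meas : Measurable Y1)
    (hG'meas : Measurable G') (hA'meas : Measurable A')
    (hS0'meas : Measurable S0') (hS1'meas : Measurable S1')
    (hY0'meas : Measurable Y0') (hY1'meas : Measurable Y1')
    (hSdef : ∀ ω, S ω = bif A ω then S1 ω else S0 ω)
    (hYdef : ∀ ω, Y ω = bif A ω then Y1 ω else Y0 ω)
    (hS'def : ∀ ω, S' ω = bif A' ω then S1' ω else S0' ω)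
    (hY'def : ∀ ω, Y' ω = bif A' ω then Y1' ω else Y0' ω)
    -- Assumption 5 for μ
    (hA5pos : ∀ g : Fin m, 0 < μ {ω | G ω = g})
    (hA5ov : ∀ g : Fin m, 0 < condP μ {ω | A ω = true} {ω | G ω = g} ∧
        condP μ {ω | A ω = true} {ω | G ω = g} < 1)
    (hA5ind : ∀ (g : Fin m) (a s0 s1 y0 y1 : Bool),
      condP μ {ω | A ω = a ∧ S0 ω = s0 ∧ S1 ω = s1 ∧ Y0 ω = y0 ∧ Y1 ω = y1} {ω | G ω = g} =
        condP μ {ω | A ω = a} {ω | G ω = g} *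
          condP μ {ω | S0 ω = s0 ∧ S1 ω = s1 ∧ Y0 ω = y0 ∧ Y1 ω = y1} {ω | G ω = g})
    -- Assumption 5 for μ'
    (hA5pos' : ∀ g : Fin m, 0 < μ' {ω | G' ω = g})
    (hA5ov' : ∀ g : Fin m, 0 < condP μ' {ω | A' ω = true} {ω | G' ω = g} ∧
        condP μ' {ω | A' ω = true} {ω | G' ω = g} < 1)
    (hA5ind' : ∀ (g : Fin m) (a s0 s1 y0 y1 : Bool),
      condP μ' {ω | A' ω = a ∧ S0' ω = s0 ∧ S1' ω = s1 ∧ Y0' ω = y0 ∧ Y1' ω = y1}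
          {ω | G' ω = g} =
        condP μ' {ω | A' ω = a} {ω | G' ω = g} *
          condP μ' {ω | S0' ω = s0 ∧ S1' ω = s1 ∧ Y0' ω = y0 ∧ Y1' ω = y1} {ω | G' ω = g})
    -- Assumption 6 for μ
    (hA6pos : ∀ a c : Bool, 0 < μ {ω | S0 ω = a ∧ Y0 ω = c})
    (hA6 : ∀ (a b c d : Bool) (g : Fin m), 0 < μ {ω | S0 ω = a ∧ Y0 ω = c ∧ G ω = g} →
      condP μ {ω | S1 ω = b ∧ Y1 ω = d} {ω | S0 ω = a ∧ Y0 ω = c ∧ G ω = g} =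
        condP μ {ω | S1 ω = b ∧ Y1 ω = d} {ω | S0 ω = a ∧ Y0 ω = c})
    -- Assumption 6 for μ'
    (hA6pos' : ∀ a c : Bool, 0 < μ' {ω | S0' ω = a ∧ Y0' ω = c})
    (hA6' : ∀ (a b c d : Bool) (g : Fin m), 0 < μ' {ω | S0' ω = a ∧ Y0' ω = c ∧ G' ω = g} →
      condP μ' {ω | S1' ω = b ∧ Y1' ω = d} {ω | S0' ω = a ∧ Y0' ω = c ∧ G' ω = g} =
        condP μ' {ω | S1' ω = b ∧ Y1' ω = d} {ω | S0' ω = a ∧ Y0' ω = c})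
    -- monotonicity conditions for μ and μ'
    (hmonoY : μ {ω | Y0 ω ≤ Y1 ω} = 1)
    (hmonoS : μ {ω | S0 ω ≤ S1 ω} = 1)
    (hmonoY' : μ' {ω | Y0' ω ≤ Y1' ω} = 1)
    (hmonoS' : μ' {ω | S0' ω ≤ S1' ω} = 1)
    -- Condition A (parts (i) and (ii)) for μ and μ'
    (hCAi : (Matrix.of fun (g : Fin m) (j : Fin 2) =>
      condP μ {ω | S0 ω = false ∧ Y0 ω = (j = 1 : Bool)} {ω | G ω = g}).rank = 2)
    (hCAii : (Matrix.of fun (g : Fin m) (j : Fin 2) =>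
      condP μ {ω | S0 ω = (j = 1 : Bool) ∧ Y0 ω = false} {ω | G ω = g}).rank = 2)
    (hCAi' : (Matrix.of fun (g : Fin m) (j : Fin 2) =>
      condP μ' {ω | S0' ω = false ∧ Y0' ω = (j = 1 : Bool)} {ω | G' ω = g}).rank = 2)
    (hCAii' : (Matrix.of fun (g : Fin m) (j : Fin 2) =>
      condP μ' {ω | S0' ω = (j = 1 : Bool) ∧ Y0' ω = false} {ω | G' ω = g}).rank = 2)
    -- equal observed data distributions
    (hobs : ∀ (g : Fin m) (a s y : Bool),
      μ {ω | G ω = g ∧ A ω = a ∧ S ω = s ∧ Y ω = y} =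
        μ' {ω | G' ω = g ∧ A' ω = a ∧ S' ω = s ∧ Y' ω = y}) :
    (∀ (a b c d : Bool) (g : Fin m),
      condP μ {ω | S0 ω = a ∧ S1 ω = b ∧ Y0 ω = c ∧ Y1 ω = d} {ω | G ω = g} =
        condP μ' {ω | S0' ω = a ∧ S1' ω = b ∧ Y0' ω = c ∧ Y1' ω = d} {ω | G' ω = g}) ∧
    (∀ (a b : Bool) (g : Fin m), 0 < μ {ω | S0 ω = a ∧ S1 ω = b ∧ G ω = g} →
      condP μ {ω | Y1 ω = true} {ω | S0 ω = a ∧ S1 ω = b ∧ G ω = g} -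
        condP μ {ω | Y0 ω = true} {ω | S0 ω = a ∧ S1 ω = b ∧ G ω = g} =
      condP μ' {ω | Y1' ω = true} {ω | S0' ω = a ∧ S1' ω = b ∧ G' ω = g} -
        condP μ' {ω | Y0' ω = true} {ω | S0' ω = a ∧ S1' ω = b ∧ G' ω = g}) :=
  stmt6_general μ μ' G A S0 S1 Y0 Y1 S Y G' A' S0' S1' Y0' Y1' S' Y' hGmeas hAmeas hS0meas hS1meas
    hY0meas hY1meas hG'meas hA'meas hS0'meas hS1'meas hY0'meas hY1'meas hSdef hYdef hS'def hY'def
    hA5pos hA5ov hA5ind hA5ind' hA6pos hA6 hA6pos' hA6' hmonoY hmonoS hmonoY' hmonoS' hCAi hCAii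
    hobs
end
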